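/- arXiv:2107.10062 — 9 statements merged into one kernel-verified Lean document; each statement's English description precedes it below -/
import Mathlib

section
/- Let E_c ∈ ℝ^{n×n} (c ∈ I) satisfy ∑_{c∈I} E_c[ξ]² = 2 at every pixel ξ, and let Ω_0 = {(E_c ⊙ x)_{c∈I} : x ∈ ℂ^{n×n}} ⊆ H. Then for every x = (x_c)_{c∈I} ∈ H, the projection of x onto Ω_0 is the singleton P_{Ω_0}(x) = {(E_c ⊙ z)_{c∈I}}, where z = (1/2)·∑_{c∈I} E_c ⊙ x_c. -/
noncomputable section

/-- The underlying space `H` of 6-tuples of `n × n` complex matrices, with the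
Frobenius (Euclidean) inner product. -/
abbrev H (n : ℕ) := EuclideanSpace ℂ (Fin 6 × Fin n × Fin n)

/-- The (possibly multivalued) metric projector onto a set `Ω`. -/
def proj {E : Type*} [NormedAddCommGroup E] (Ω : Set E) (x : E) : Set E :=
  {w | w ∈ Ω ∧ dist x w = Metric.infDist x Ω}

/-- Projection onto `Ω₀ = {(E_c ⊙ x)_c : x ∈ ℂ^{n×n}}` when
`∑_c E_c[ξ]² = 2` at every pixel: `P_{Ω₀}(x)` is the singleton `{(E_c ⊙ z)_c}` with
`z = (1/2)·∑_c E_c ⊙ x_c`. -/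
theorem proj_Omega0 (n : ℕ) (hn : 1 ≤ n)
    (E : Fin 6 → Fin n × Fin n → ℝ)
    (hE : ∀ ξ, ∑ c : Fin 6, (E c ξ) ^ 2 = 2)
    (Ω₀ : Set (H n))
    (hΩ₀ : Ω₀ = {y : H n | ∃ x : Fin n × Fin n → ℂ, ∀ c ξ, y (c, ξ) = (E c ξ : ℂ) * x ξ}) :
    ∀ x : H n,
      proj Ω₀ x =
        {(WithLp.toLp 2 (fun p : Fin 6 × Fin n × Fin n =>
            (E p.1 p.2 : ℂ) * ((1 / 2 : ℂ) * ∑ c : Fin 6, (E c p.2 : ℂ) * x (c, p.2))) : H n)} := by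
  subst hΩ₀
  intro x
  set z : Fin n × Fin n → ℂ := fun ξ => (1 / 2 : ℂ) * ∑ c : Fin 6, (E c ξ : ℂ) * x (c, ξ) with hz
  set w₀ : H n := WithLp.toLp 2 (fun p : Fin 6 × Fin n × Fin n => (E p.1 p.2 : ℂ) * z p.2) with hw₀
  set Ω : Set (H n) := {y : H n | ∃ u : Fin n × Fin n → ℂ, ∀ c ξ, y (c, ξ) = (E c ξ : ℂ) * u ξ}
    with hΩ
  have hw₀mem : w₀ ∈ Ω := ⟨z, fun c ξ => rfl⟩
  have h2 : ∀ ξ, ∑ c : Fin 6, ((E c ξ : ℂ)) ^ 2 = 2 := by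
    intro ξ
    exact_mod_cast congrArg (Complex.ofReal) (hE ξ)
  have horth : ∀ u : Fin n × Fin n → ℂ, ∀ v : H n,
      (∀ p : Fin 6 × Fin n × Fin n, v p = (E p.1 p.2 : ℂ) * u p.2) →
      (inner (𝕜 := ℂ) v (x - w₀)) = 0 := by
    intro u v hv
    rw [PiLp.inner_apply]
    rw [Fintype.sum_prod_type, Finset.sum_comm]
    refine Finset.sum_eq_zero fun ξ _ => ?_
    have key : ∑ c : Fin 6, (E c ξ : ℂ) * (x (c, ξ) - (E c ξ : ℂ) * z ξ) = 0 := by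
      simp only [mul_sub, Finset.sum_sub_distrib]
      have : ∑ c : Fin 6, (E c ξ : ℂ) * ((E c ξ : ℂ) * z ξ)
          = (∑ c : Fin 6, ((E c ξ : ℂ)) ^ 2) * z ξ := by
        rw [Finset.sum_mul]; congr 1; ext c; ring
      rw [this, h2, hz]
      ring
    calc ∑ c : Fin 6, (inner (𝕜 := ℂ) (v (c, ξ)) ((x - w₀) (c, ξ)))
        = (starRingEnd ℂ) (u ξ) * ∑ c : Fin 6, (E c ξ : ℂ) * (x (c, ξ) - (E c ξ : ℂ) * z ξ) := by
          rw [Finset.mul_sum]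
          refine Finset.sum_congr rfl fun c _ => ?_
          simp [RCLike.inner_apply, hv (c, ξ), map_mul, Complex.conj_ofReal, PiLp.sub_apply, hw₀]
          ring
      _ = 0 := by rw [key, mul_zero]
  have hPyth : ∀ y ∈ Ω, ‖x - y‖ ^ 2 = ‖x - w₀‖ ^ 2 + ‖w₀ - y‖ ^ 2 := by
    intro y hy
    obtain ⟨u, hu⟩ := hy
    have hinner : (inner (𝕜 := ℂ) (w₀ - y) (x - w₀)) = 0 := by
      refine horth (fun ξ => z ξ - u ξ) _ fun p => ?_
      obtain ⟨c, ξ⟩ := p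
      simp [PiLp.sub_apply, hw₀, hu c ξ]
      ring
    have hinner' : (inner (𝕜 := ℂ) (x - w₀) (w₀ - y)) = 0 := by
      rw [← inner_conj_symm, hinner, map_zero]
    have hxy : x - y = (x - w₀) + (w₀ - y) := by abel
    rw [hxy, @norm_add_sq ℂ, hinner']
    simp
  have hne : Ω.Nonempty := ⟨w₀, hw₀mem⟩
  have hge : ∀ y ∈ Ω, dist x w₀ ≤ dist x y := by
    intro y hy
    rw [dist_eq_norm, dist_eq_norm]
    nlinarith [hPyth y hy, norm_nonneg (x - y), norm_nonneg (x - w₀), norm_nonneg (w₀ - y),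
      sq_nonneg ‖w₀ - y‖]
  have hinf : Metric.infDist x Ω = dist x w₀ := by
    refine le_antisymm (Metric.infDist_le_dist_of_mem hw₀mem) (le_of_not_gt fun hlt => ?_)
    obtain ⟨y, hy, hylt⟩ := (Metric.infDist_lt_iff hne).mp hlt
    exact absurd (hge y hy) (not_le.mpr hylt)
  ext w
  simp only [proj, Set.mem_setOf_eq, Set.mem_singleton_iff, hinf]
  constructor
  · rintro ⟨hwΩ, hdist⟩
    have hP := hPyth w hwΩ
    rw [dist_eq_norm, dist_eq_norm] at hdist
    rw [hdist] at hP
    have h0 : ‖w₀ - w‖ ^ 2 = 0 := by linarith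
    have h0' : w₀ - w = 0 := by
      have := pow_eq_zero_iff (n := 2) two_ne_zero |>.mp h0
      simpa [norm_eq_zero] using this
    have hww : w = w₀ := (sub_eq_zero.mp h0').symm
    rw [hww, hw₀]
  · intro hw
    have hww : w = w₀ := by rw [hw, hw₀]
    rw [hww]
    exact ⟨hw₀mem, rfl⟩
end
end

section
/- Let E_c ∈ ℝ^{n×n} (c ∈ I) satisfy ∑_{c∈I} E_c[ξ]² = 2 at every pixel ξ, let Ω_0 = {(E_c ⊙ x)_{c∈I} : x ∈ ℂ^{n×n}} ⊆ H, let m ≥ 1, and let A = {(x,x,…,x) ∈ H^m : x ∈ Ω_0}. Then for every w = (w_1,…,w_m) ∈ H^m, writing w̄ = (w̄_c)_{c∈I} = (1/m)·∑_{d=1}^m w_d and z̄ = (1/2)·∑_{c∈I} E_c ⊙ w̄_c, the projection of w onto A is the singleton P_A(w) = {((E_c ⊙ z̄)_{c∈I}, …, (E_c ⊙ z̄)_{c∈I})} (m identical copies). -/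
noncomputable section

/-- The product Hilbert space `H^m`. -/
abbrev Hm (n m : ℕ) := PiLp 2 (fun _ : Fin m => H n)

lemma key_alg (m' : ℕ) (e : Fin 6 → ℝ) (he : ∑ c : Fin 6, ((e c : ℂ))^2 = 2)
    (S : Fin 6 → ℂ) (z x : ℂ)
    (hz : ∑ c : Fin 6, (e c : ℂ) * S c = (m' : ℂ) * (2 * z)) :
    ∑ c : Fin 6, ((starRingEnd ℂ) (S c) - (m' : ℂ) * (e c : ℂ) * (starRingEnd ℂ) z) *
      ((e c : ℂ) * x) = 0 := by
  have hz' : ∑ c : Fin 6, (e c : ℂ) * (starRingEnd ℂ) (S c)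
      = (m' : ℂ) * (2 * (starRingEnd ℂ) z) := by
    have := congrArg (starRingEnd ℂ) hz
    simpa [map_sum, map_mul, Complex.conj_ofReal, map_ofNat] using this
  calc ∑ c : Fin 6, ((starRingEnd ℂ) (S c) - (m' : ℂ) * (e c : ℂ) * (starRingEnd ℂ) z) *
        ((e c : ℂ) * x)
      = (∑ c : Fin 6, (e c : ℂ) * (starRingEnd ℂ) (S c)) * x
        - ((m' : ℂ) * (starRingEnd ℂ) z * x) * ∑ c : Fin 6, ((e c : ℂ))^2 := by
        rw [Finset.sum_mul, Finset.mul_sum, ← Finset.sum_sub_distrib]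
        exact Finset.sum_congr rfl fun c _ => by ring
    _ = 0 := by rw [hz', he]; ring

/-- Projection onto the diagonal set
`A = {(x,…,x) ∈ H^m : x ∈ Ω₀}` with `Ω₀ = {(E_c ⊙ x)_c}` and `∑_c E_c[ξ]² = 2`:
for `w ∈ H^m`, writing `w̄ = (1/m)∑_d w_d` and `z̄ = (1/2)∑_c E_c ⊙ w̄_c`,
`P_A(w)` is the singleton consisting of `m` copies of `(E_c ⊙ z̄)_c`. -/
theorem proj_diagonal_Omega0 (n m : ℕ) (hn : 1 ≤ n) (hm : 1 ≤ m)
    (E : Fin 6 → Fin n × Fin n → ℝ)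
    (hE : ∀ ξ, ∑ c : Fin 6, (E c ξ) ^ 2 = 2)
    (Ω₀ : Set (H n))
    (hΩ₀ : Ω₀ = {y : H n | ∃ x : Fin n × Fin n → ℂ, ∀ c ξ, y (c, ξ) = (E c ξ : ℂ) * x ξ})
    (A : Set (Hm n m))
    (hA : A = {u : Hm n m | ∃ x ∈ Ω₀, ∀ d, u d = x}) :
    ∀ w : Hm n m,
      proj A w =
        {(WithLp.toLp 2 (fun _ : Fin m =>
          (WithLp.toLp 2 (fun p : Fin 6 × Fin n × Fin n =>
            (E p.1 p.2 : ℂ) *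
              ((1 / 2 : ℂ) * ∑ c : Fin 6,
                (E c p.2 : ℂ) * (((m : ℂ)⁻¹ • ∑ d : Fin m, w d) (c, p.2)))) : H n)) : Hm n m)} := by
  intro w
  have hm0 : (m : ℂ) ≠ 0 := Nat.cast_ne_zero.mpr (by omega)
  set z : Fin n × Fin n → ℂ := fun ξ =>
    (1 / 2 : ℂ) * ∑ c : Fin 6, (E c ξ : ℂ) * (((m : ℂ)⁻¹ • ∑ d : Fin m, w d) (c, ξ)) with hzdef
  set pH : H n := (WithLp.toLp 2 (fun p : Fin 6 × Fin n × Fin n =>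
            (E p.1 p.2 : ℂ) *
              ((1 / 2 : ℂ) * ∑ c : Fin 6,
                (E c p.2 : ℂ) * (((m : ℂ)⁻¹ • ∑ d : Fin m, w d) (c, p.2)))) : H n) with hpHdef
  set P : Hm n m := (WithLp.toLp 2 (fun _ : Fin m => pH) : Hm n m) with hPdef
  have hpH : ∀ c ξ, pH (c, ξ) = (E c ξ : ℂ) * z ξ := fun c ξ => rfl
  -- applying the smul/sum at a coordinate
  have hsmul : ∀ c ξ, (((m : ℂ)⁻¹ • ∑ d : Fin m, w d) (c, ξ))
      = (m : ℂ)⁻¹ * ∑ d : Fin m, w d (c, ξ) := by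
    intro c ξ
    have h1 : (∑ d : Fin m, w d) (c, ξ) = ∑ d : Fin m, w d (c, ξ) :=
      by rw [WithLp.ofLp_sum]; exact Finset.sum_apply (c, ξ) Finset.univ (fun d => w d)
    rw [PiLp.smul_apply, smul_eq_mul, h1]
  have hz : ∀ ξ, ∑ c : Fin 6, (E c ξ : ℂ) * (∑ d : Fin m, w d (c, ξ))
      = (m : ℂ) * (2 * z ξ) := by
    intro ξ
    rw [hzdef]
    simp only [hsmul, Finset.mul_sum]
    refine Finset.sum_congr rfl fun c _ => Finset.sum_congr rfl fun d _ => ?_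
    field_simp
  have he' : ∀ ξ, ∑ c : Fin 6, ((E c ξ : ℝ) : ℂ)^2 = 2 := by
    intro ξ
    have := hE ξ
    push_cast
    exact_mod_cast this
  -- P ∈ A
  have hPA : P ∈ A := by
    rw [hA]
    refine ⟨pH, ?_, fun d => rfl⟩
    rw [hΩ₀]
    exact ⟨z, fun c ξ => rfl⟩
  -- orthogonality
  have horth : ∀ a ∈ A, (inner ℂ (w - P) a : ℂ) = 0 := by
    intro a ha
    rw [hA] at ha
    obtain ⟨y, hyΩ, hay⟩ := ha
    rw [hΩ₀] at hyΩ
    obtain ⟨xf, hxf⟩ := hyΩ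
    rw [PiLp.inner_apply]
    have : ∀ d : Fin m, (inner ℂ ((w - P) d) (a d) : ℂ)
        = ∑ ξ : Fin n × Fin n, ∑ c : Fin 6,
            (starRingEnd ℂ) (w d (c, ξ) - (E c ξ : ℂ) * z ξ) * ((E c ξ : ℂ) * xf ξ) := by
      intro d
      rw [PiLp.inner_apply]
      rw [Fintype.sum_prod_type]
      rw [Finset.sum_comm]
      refine Finset.sum_congr rfl fun ξ _ => Finset.sum_congr rfl fun c _ => ?_
      rw [RCLike.inner_apply]
      rw [hay d, hxf c ξ, mul_comm]
      rfl
    simp only [this]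
    rw [Finset.sum_comm]
    refine Finset.sum_eq_zero fun ξ _ => ?_
    rw [Finset.sum_comm]
    have step : ∀ c : Fin 6,
        ∑ d : Fin m, (starRingEnd ℂ) (w d (c, ξ) - (E c ξ : ℂ) * z ξ) * ((E c ξ : ℂ) * xf ξ)
        = ((starRingEnd ℂ) (∑ d : Fin m, w d (c, ξ))
            - (m : ℂ) * (E c ξ : ℂ) * (starRingEnd ℂ) (z ξ)) * ((E c ξ : ℂ) * xf ξ) := by
      intro c
      rw [← Finset.sum_mul]
      congr 1
      simp only [map_sub, map_mul, Complex.conj_ofReal, Finset.sum_sub_distrib, ← map_sum]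
      rw [Finset.sum_const, Finset.card_univ, Fintype.card_fin, nsmul_eq_mul]
      ring
    simp only [step]
    exact key_alg m (fun c => E c ξ) (he' ξ) (fun c => ∑ d : Fin m, w d (c, ξ))
      (z ξ) (xf ξ) (hz ξ)
  -- A is closed under subtracting P
  have hsubA : ∀ q ∈ A, q - P ∈ A := by
    intro q hq
    rw [hA] at hq ⊢
    obtain ⟨y, hyΩ, hqy⟩ := hq
    rw [hΩ₀] at hyΩ
    obtain ⟨xf, hxf⟩ := hyΩ
    refine ⟨y - pH, ?_, fun d => ?_⟩
    · rw [hΩ₀]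
      refine ⟨fun ξ => xf ξ - z ξ, fun c ξ => ?_⟩
      rw [PiLp.sub_apply, hxf c ξ, hpH c ξ]
      ring
    · rw [PiLp.sub_apply, hqy d]
  -- Pythagoras
  have hpyth : ∀ q ∈ A, ‖w - q‖^2 = ‖w - P‖^2 + ‖q - P‖^2 := by
    intro q hq
    have h1 : w - q = (w - P) - (q - P) := by abel
    rw [h1, @norm_sub_sq ℂ _ _ _ _ (w - P) (q - P), horth _ (hsubA q hq)]
    simp
  have hinf : dist w P = Metric.infDist w A := by
    refine le_antisymm ?_ (Metric.infDist_le_dist_of_mem hPA)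
    rw [Metric.infDist_eq_iInf]
    have : Nonempty A := ⟨⟨P, hPA⟩⟩
    refine le_ciInf fun q => ?_
    have hq := q.2
    rw [dist_eq_norm, dist_eq_norm]
    nlinarith [hpyth q hq, norm_nonneg (w - P), norm_nonneg (w - (q : Hm n m)), sq_nonneg ‖(q : Hm n m) - P‖]
  ext q
  simp only [proj, Set.mem_setOf_eq, Set.mem_singleton_iff]
  constructor
  · rintro ⟨hqA, hqd⟩
    have h2 : ‖w - q‖ = ‖w - P‖ := by
      rw [← dist_eq_norm, ← dist_eq_norm, hqd, hinf]
    have h3 := hpyth q hqA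
    rw [h2] at h3
    have h4 : ‖q - P‖ = 0 := by nlinarith [norm_nonneg (q - P)]
    exact sub_eq_zero.mp (norm_eq_zero.mp h4)
  · rintro rfl
    exact ⟨hPA, hinf⟩
end
end

section
/- Let E_c ∈ ℝ^{n×n} (c ∈ I) be fixed real matrices, let A ∈ ℝ^{n×n} have nonnegative entries, let χ = {(E_c ⊙ A ⊙ e^{iΦ})_{c∈I} : Φ ∈ ℝ^{n×n}} ⊆ H, let m ≥ 1, and let A_χ = {(x,x,…,x) ∈ H^m : x ∈ χ}. Then for every w = (w_1,…,w_m) ∈ H^m, writing w̄ = (w̄_c)_{c∈I} = (1/m)·∑_{d=1}^m w_d and S = ∑_{c∈I} E_c ⊙ A ⊙ w̄_c: P_{A_χ}(w) = { ((E_c ⊙ A ⊙ e^{iΨ})_{c∈I}, …, (E_c ⊙ A ⊙ e^{iΨ})_{c∈I}) (m copies) : Ψ ∈ ℝ^{n×n} and for every pixel ξ, e^{iΨ[ξ]}·|S[ξ]| = S[ξ] }. -/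
noncomputable section

namespace ProjDiagAux

lemma re_eq_abs_iff (u : ℂ) : u.re = ‖u‖ ↔ (‖u‖ : ℂ) = u := by
  constructor
  · intro h
    have h2 : (‖u‖)^2 = u.re^2 + u.im^2 := by
      rw [Complex.sq_norm, Complex.normSq_apply]; ring
    rw [← h] at h2
    have him : u.im = 0 := by nlinarith
    apply Complex.ext <;> simp [him, ← h]
  · intro h
    rw [← h]; simp

lemma exp_key (φ : ℝ) : Complex.exp (Complex.I * φ) * Complex.exp (-(Complex.I * φ)) = 1 := by
  rw [← Complex.exp_add]; simp

lemma exp_re_le (φ : ℝ) (z : ℂ) :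
    (Complex.exp (-(Complex.I * φ)) * z).re ≤ ‖z‖ := by
  calc (Complex.exp (-(Complex.I * φ)) * z).re
      ≤ ‖Complex.exp (-(Complex.I * φ)) * z‖ := Complex.re_le_norm _
    _ = ‖z‖ := by rw [norm_mul]; simp [Complex.norm_exp]

lemma exp_re_eq_iff (φ : ℝ) (z : ℂ) :
    (Complex.exp (-(Complex.I * φ)) * z).re = ‖z‖ ↔
      Complex.exp (Complex.I * φ) * (‖z‖ : ℂ) = z := by
  have habs : ‖Complex.exp (-(Complex.I * φ)) * z‖ = ‖z‖ := by
    rw [norm_mul]; simp [Complex.norm_exp]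
  rw [← habs, re_eq_abs_iff, habs]
  have key := exp_key φ
  constructor
  · intro h
    linear_combination Complex.exp (Complex.I * φ) * h + z * key
  · intro h
    linear_combination Complex.exp (-(Complex.I * φ)) * h - (‖z‖ : ℂ) * key

lemma pointwise (a : ℂ) (e b φ : ℝ) :
    Complex.normSq (a - (e:ℂ) * b * Complex.exp (Complex.I * φ)) =
      Complex.normSq a + (e*b)^2 - 2 * ((e*b) * (Complex.exp (-(Complex.I * φ)) * a).re) := by
  rw [Complex.normSq_sub]
  have h1 : Complex.normSq ((e:ℂ) * b * Complex.exp (Complex.I * φ)) = (e*b)^2 := by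
    have he : ‖Complex.exp (Complex.I * φ)‖ = 1 := by rw [Complex.norm_exp]; simp
    rw [Complex.normSq_eq_norm_sq, norm_mul, norm_mul, he, Complex.norm_real, Complex.norm_real,
      Real.norm_eq_abs, Real.norm_eq_abs]
    rw [mul_one, ← abs_mul, _root_.sq_abs]
  have h2 : (a * (starRingEnd ℂ) ((e:ℂ) * b * Complex.exp (Complex.I * φ))).re
      = (e*b) * (Complex.exp (-(Complex.I * φ)) * a).re := by
    have h3 : (starRingEnd ℂ) ((e:ℂ) * b * Complex.exp (Complex.I * φ))
        = (e:ℂ) * b * Complex.exp (-(Complex.I * φ)) := by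
      simp only [map_mul, Complex.conj_ofReal, ← Complex.exp_conj]
      congr 1
      simp [Complex.conj_I]
    rw [h3]
    have h4 : a * ((e:ℂ) * b * Complex.exp (-(Complex.I * φ)))
        = ((e*b : ℝ):ℂ) * (Complex.exp (-(Complex.I * φ)) * a) := by push_cast; ring
    rw [h4, Complex.re_ofReal_mul]
  rw [h1, h2]
  all_goals ring

lemma dist_sq (n m : ℕ) (E : Fin 6 → Fin n × Fin n → ℝ) (A : Fin n × Fin n → ℝ)
    (w : Hm n m) (Φ : Fin n × Fin n → ℝ) :
    dist w (WithLp.toLp 2 fun _ => WithLp.toLp 2 fun (p : Fin 6 × Fin n × Fin n) =>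
        (E p.1 p.2 : ℂ) * (A p.2 : ℂ) * Complex.exp (Complex.I * (Φ p.2 : ℂ)) : Hm n m) ^ 2 =
      (∑ d, ∑ p, Complex.normSq (w d p))
      + m * (∑ p : Fin 6 × Fin n × Fin n, (E p.1 p.2 * A p.2)^2)
      - 2 * ∑ ξ : Fin n × Fin n, (Complex.exp (-(Complex.I * (Φ ξ : ℂ))) *
          ∑ c, (E c ξ : ℂ) * (A ξ : ℂ) * (∑ d, w d (c, ξ))).re := by
  have hstep : dist w (WithLp.toLp 2 fun _ => WithLp.toLp 2 fun (p : Fin 6 × Fin n × Fin n) =>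
        (E p.1 p.2 : ℂ) * (A p.2 : ℂ) * Complex.exp (Complex.I * (Φ p.2 : ℂ)) : Hm n m) ^ 2
      = ∑ d, ∑ p : Fin 6 × Fin n × Fin n,
          Complex.normSq (w d p - (E p.1 p.2 : ℂ) * (A p.2 : ℂ) * Complex.exp (Complex.I * (Φ p.2 : ℂ))) := by
    rw [dist_eq_norm, PiLp.norm_sq_eq_of_L2]
    refine Finset.sum_congr rfl fun d _ => ?_
    rw [PiLp.norm_sq_eq_of_L2]
    refine Finset.sum_congr rfl fun p _ => ?_
    simp [Complex.sq_norm]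
  rw [hstep]
  have hpt : ∀ d, ∀ p : Fin 6 × Fin n × Fin n,
      Complex.normSq (w d p - (E p.1 p.2 : ℂ) * (A p.2 : ℂ) * Complex.exp (Complex.I * (Φ p.2 : ℂ)))
      = Complex.normSq (w d p) + (E p.1 p.2 * A p.2)^2
        - 2 * ((E p.1 p.2 * A p.2) * (Complex.exp (-(Complex.I * (Φ p.2 : ℂ))) * w d p).re) :=
    fun d p => pointwise (w d p) (E p.1 p.2) (A p.2) (Φ p.2)
  simp only [hpt, Finset.sum_sub_distrib, Finset.sum_add_distrib, Finset.sum_const,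
    Finset.card_univ, Fintype.card_fin, nsmul_eq_mul, ← Finset.mul_sum]
  congr 1
  have h3 : ∀ ξ : Fin n × Fin n,
      (Complex.exp (-(Complex.I * (Φ ξ : ℂ))) * ∑ c, (E c ξ : ℂ) * (A ξ : ℂ) * (∑ d, w d (c, ξ))).re
      = ∑ c, ∑ d, (E c ξ * A ξ) * (Complex.exp (-(Complex.I * (Φ ξ : ℂ))) * w d (c, ξ)).re := by
    intro ξ
    rw [Finset.mul_sum, Complex.re_sum]
    refine Finset.sum_congr rfl fun c _ => ?_
    have h5 : Complex.exp (-(Complex.I * (Φ ξ : ℂ))) * ((E c ξ : ℂ) * (A ξ : ℂ) * (∑ d, w d (c, ξ)))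
        = ∑ d, ((E c ξ * A ξ : ℝ) : ℂ) * (Complex.exp (-(Complex.I * (Φ ξ : ℂ))) * w d (c, ξ)) := by
      rw [Finset.mul_sum, Finset.mul_sum]
      refine Finset.sum_congr rfl fun d _ => ?_
      push_cast; ring
    rw [h5, Complex.re_sum]
    refine Finset.sum_congr rfl fun d _ => ?_
    rw [Complex.re_ofReal_mul]
  simp only [h3]
  congr 1
  calc (∑ d, ∑ p : Fin 6 × Fin n × Fin n,
          E p.1 p.2 * A p.2 * (Complex.exp (-(Complex.I * (Φ p.2 : ℂ))) * w d p).re)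
      = ∑ d, ∑ c, ∑ ξ, E c ξ * A ξ * (Complex.exp (-(Complex.I * (Φ ξ : ℂ))) * w d (c, ξ)).re :=
        Finset.sum_congr rfl fun d _ => Fintype.sum_prod_type _
    _ = ∑ c, ∑ d, ∑ ξ, E c ξ * A ξ * (Complex.exp (-(Complex.I * (Φ ξ : ℂ))) * w d (c, ξ)).re :=
        Finset.sum_comm
    _ = ∑ c, ∑ ξ, ∑ d, E c ξ * A ξ * (Complex.exp (-(Complex.I * (Φ ξ : ℂ))) * w d (c, ξ)).re :=
        Finset.sum_congr rfl fun c _ => Finset.sum_comm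
    _ = ∑ ξ, ∑ c, ∑ d, E c ξ * A ξ * (Complex.exp (-(Complex.I * (Φ ξ : ℂ))) * w d (c, ξ)).re :=
        Finset.sum_comm

end ProjDiagAux

open ProjDiagAux in
/-- Projection onto the diagonal set `A_χ = {(x,…,x) ∈ H^m : x ∈ χ}` with
`χ = {(E_c ⊙ A ⊙ e^{iΦ})_c : Φ ∈ ℝ^{n×n}}`: for `w ∈ H^m`, writing `w̄ = (1/m)∑_d w_d` and
`S = ∑_c E_c ⊙ A ⊙ w̄_c`, `P_{A_χ}(w)` consists of the `m`-fold copies of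
`(E_c ⊙ A ⊙ e^{iΨ})_c` over all `Ψ` with `e^{iΨ[ξ]}·|S[ξ]| = S[ξ]` at every pixel. -/
theorem proj_diagonal_chi (n m : ℕ) (hn : 1 ≤ n) (hm : 1 ≤ m)
    (E : Fin 6 → Fin n × Fin n → ℝ)
    (A : Fin n × Fin n → ℝ) (hA : ∀ ξ, 0 ≤ A ξ)
    (χ : Set (H n))
    (hχ : χ = {y : H n | ∃ Φ : Fin n × Fin n → ℝ,
      ∀ c ξ, y (c, ξ) = (E c ξ : ℂ) * (A ξ : ℂ) * Complex.exp (Complex.I * (Φ ξ : ℂ))})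
    (Aχ : Set (Hm n m))
    (hAχ : Aχ = {u : Hm n m | ∃ x ∈ χ, ∀ d, u d = x}) :
    ∀ w : Hm n m,
      proj Aχ w =
        {u : Hm n m | ∃ Ψ : Fin n × Fin n → ℝ,
          (∀ d c ξ,
            u d (c, ξ) = (E c ξ : ℂ) * (A ξ : ℂ) * Complex.exp (Complex.I * (Ψ ξ : ℂ))) ∧
          ∀ ξ,
            Complex.exp (Complex.I * (Ψ ξ : ℂ)) *
                (‖∑ c : Fin 6,
                  (E c ξ : ℂ) * (A ξ : ℂ) * (((m : ℂ)⁻¹ • ∑ d : Fin m, w d) (c, ξ))‖ : ℂ) =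
              ∑ c : Fin 6,
                (E c ξ : ℂ) * (A ξ : ℂ) * (((m : ℂ)⁻¹ • ∑ d : Fin m, w d) (c, ξ))} := by
  intro w
  classical
  have hm0 : (m : ℂ) ≠ 0 := by
    exact_mod_cast Nat.cast_ne_zero.mpr (by omega)
  -- the map Φ ↦ m-fold copy of (E ⊙ A ⊙ e^{iΦ})
  set f : (Fin n × Fin n → ℝ) → Hm n m := fun Φ =>
    (WithLp.toLp 2 fun _ => WithLp.toLp 2 fun (p : Fin 6 × Fin n × Fin n) =>
      (E p.1 p.2 : ℂ) * (A p.2 : ℂ) * Complex.exp (Complex.I * (Φ p.2 : ℂ)) : Hm n m) with hf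
  -- T ξ = ∑_c E A (∑_d w_d)(c,ξ)
  set T : Fin n × Fin n → ℂ := fun ξ =>
    ∑ c, (E c ξ : ℂ) * (A ξ : ℂ) * (∑ d, w d (c, ξ)) with hT
  -- membership in Aχ
  have hmem : ∀ u : Hm n m, u ∈ Aχ ↔ ∃ Φ : Fin n × Fin n → ℝ, u = f Φ := by
    intro u
    rw [hAχ]
    constructor
    · rintro ⟨x, hx, hud⟩
      rw [hχ] at hx
      obtain ⟨Φ, hΦ⟩ := hx
      refine ⟨Φ, ?_⟩
      ext d p
      rw [hud d]
      obtain ⟨c, ξ⟩ := p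
      exact hΦ c ξ
    · rintro ⟨Φ, rfl⟩
      refine ⟨(WithLp.toLp 2 fun p => (E p.1 p.2 : ℂ) * (A p.2 : ℂ) * Complex.exp (Complex.I * (Φ p.2 : ℂ)) : H n),
        ?_, fun d => rfl⟩
      rw [hχ]
      exact ⟨Φ, fun c ξ => rfl⟩
  -- the statement's S equals m⁻¹ T
  have hS : ∀ ξ, (∑ c : Fin 6,
      (E c ξ : ℂ) * (A ξ : ℂ) * (((m : ℂ)⁻¹ • ∑ d : Fin m, w d) (c, ξ))) = (m : ℂ)⁻¹ * T ξ := by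
    intro ξ
    rw [hT, Finset.mul_sum]
    refine Finset.sum_congr rfl fun c _ => ?_
    have h1 : ((m : ℂ)⁻¹ • ∑ d : Fin m, w d) (c, ξ) = (m : ℂ)⁻¹ * (∑ d, w d (c, ξ)) := by
      have h1a : ((m : ℂ)⁻¹ • ∑ d : Fin m, w d) (c, ξ)
          = (m:ℂ)⁻¹ * ((∑ d : Fin m, w d) (c, ξ)) := rfl
      rw [h1a]
      congr 1
      rw [WithLp.ofLp_sum]
      exact Finset.sum_apply (c, ξ) Finset.univ _
    rw [h1]; ring
  -- equivalence of the phase conditions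
  have hcond : ∀ (Ψ : Fin n × Fin n → ℝ) (ξ : Fin n × Fin n),
      (Complex.exp (Complex.I * (Ψ ξ : ℂ)) *
          (‖∑ c : Fin 6,
            (E c ξ : ℂ) * (A ξ : ℂ) * (((m : ℂ)⁻¹ • ∑ d : Fin m, w d) (c, ξ))‖ : ℂ) =
        ∑ c : Fin 6, (E c ξ : ℂ) * (A ξ : ℂ) * (((m : ℂ)⁻¹ • ∑ d : Fin m, w d) (c, ξ)))
      ↔ Complex.exp (Complex.I * (Ψ ξ : ℂ)) * (‖T ξ‖ : ℂ) = T ξ := by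
    intro Ψ ξ
    rw [hS ξ]
    have habs : (‖(m : ℂ)⁻¹ * T ξ‖ : ℂ) = (m : ℂ)⁻¹ * (‖T ξ‖ : ℂ) := by
      rw [norm_mul, norm_inv, Complex.norm_natCast]
      push_cast
      ring
    rw [habs, show Complex.exp (Complex.I * (Ψ ξ : ℂ)) * ((m : ℂ)⁻¹ * (‖T ξ‖ : ℂ))
        = (m : ℂ)⁻¹ * (Complex.exp (Complex.I * (Ψ ξ : ℂ)) * (‖T ξ‖ : ℂ)) by ring]
    exact mul_right_inj' (inv_ne_zero hm0)
  -- squared distance from w to f Φ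
  have hd2 : ∀ Φ : Fin n × Fin n → ℝ, dist w (f Φ) ^ 2 =
      ((∑ d, ∑ p, Complex.normSq (w d p))
        + m * (∑ p : Fin 6 × Fin n × Fin n, (E p.1 p.2 * A p.2)^2))
      - 2 * ∑ ξ : Fin n × Fin n, (Complex.exp (-(Complex.I * (Φ ξ : ℂ))) * T ξ).re := by
    intro Φ
    rw [hf]
    have := dist_sq n m E A w Φ
    rw [this]
    all_goals ring_nf
  -- the optimal phase
  set Ψ₀ : Fin n × Fin n → ℝ := fun ξ => (T ξ).arg with hΨ₀
  have hopt : ∀ ξ, Complex.exp (Complex.I * ((Ψ₀ ξ : ℝ) : ℂ)) * (‖T ξ‖ : ℂ) = T ξ := by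
    intro ξ
    rw [hΨ₀]
    rw [mul_comm (Complex.exp _) _, mul_comm Complex.I _]
    exact Complex.norm_mul_exp_arg_mul_I (T ξ)
  have hoptre : ∀ ξ, (Complex.exp (-(Complex.I * ((Ψ₀ ξ : ℝ) : ℂ))) * T ξ).re = ‖T ξ‖ :=
    fun ξ => (exp_re_eq_iff (Ψ₀ ξ) (T ξ)).mpr (hopt ξ)
  -- dist to f Ψ₀ is minimal
  have hle : ∀ Φ : Fin n × Fin n → ℝ, dist w (f Ψ₀) ≤ dist w (f Φ) := by
    intro Φ
    have h1 : dist w (f Ψ₀) ^ 2 ≤ dist w (f Φ) ^ 2 := by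
      rw [hd2, hd2]
      have : ∑ ξ : Fin n × Fin n, (Complex.exp (-(Complex.I * (Φ ξ : ℂ))) * T ξ).re
          ≤ ∑ ξ : Fin n × Fin n, (Complex.exp (-(Complex.I * ((Ψ₀ ξ : ℝ) : ℂ))) * T ξ).re := by
        refine Finset.sum_le_sum fun ξ _ => ?_
        rw [hoptre ξ]
        exact exp_re_le (Φ ξ) (T ξ)
      linarith
    nlinarith [dist_nonneg (x := w) (y := f Ψ₀), dist_nonneg (x := w) (y := f Φ)]
  have hne : Aχ.Nonempty := ⟨f 0, (hmem (f 0)).mpr ⟨0, rfl⟩⟩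
  have hinf : Metric.infDist w Aχ = dist w (f Ψ₀) := by
    refine le_antisymm (Metric.infDist_le_dist_of_mem ((hmem (f Ψ₀)).mpr ⟨Ψ₀, rfl⟩)) ?_
    rw [Metric.infDist_eq_iInf]
    have : Nonempty ↥Aχ := hne.to_subtype
    refine le_ciInf fun y => ?_
    obtain ⟨Φ, hy⟩ := (hmem y).mp y.2
    rw [hy]
    exact hle Φ
  -- final set equality
  ext u
  simp only [proj, Set.mem_setOf_eq, hinf]
  constructor
  · rintro ⟨huA, hud⟩
    obtain ⟨Φ, rfl⟩ := (hmem u).mp huA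
    refine ⟨Φ, fun d c ξ => rfl, fun ξ => ?_⟩
    rw [hcond Φ ξ]
    -- from equality of distances, deduce pointwise equality
    have hsq : dist w (f Φ) ^ 2 = dist w (f Ψ₀) ^ 2 := by rw [hud]
    rw [hd2, hd2] at hsq
    have hsum : ∑ ξ : Fin n × Fin n, (Complex.exp (-(Complex.I * (Φ ξ : ℂ))) * T ξ).re
        = ∑ ξ : Fin n × Fin n, ‖T ξ‖ := by
      have := hsq
      simp only [hoptre] at this ⊢
      linarith
    have hpw := (Finset.sum_eq_sum_iff_of_le
      (fun ξ _ => exp_re_le (Φ ξ) (T ξ))).mp hsum ξ (Finset.mem_univ ξ)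
    exact (exp_re_eq_iff (Φ ξ) (T ξ)).mp hpw
  · rintro ⟨Ψ, huΨ, hph⟩
    have hu : u = f Ψ := by
      ext d p
      obtain ⟨c, ξ⟩ := p
      exact huΨ d c ξ
    have hph' : ∀ ξ, Complex.exp (Complex.I * (Ψ ξ : ℂ)) * (‖T ξ‖ : ℂ) = T ξ :=
      fun ξ => (hcond Ψ ξ).mp (hph ξ)
    have hre : ∀ ξ, (Complex.exp (-(Complex.I * (Ψ ξ : ℂ))) * T ξ).re = ‖T ξ‖ :=
      fun ξ => (exp_re_eq_iff (Ψ ξ) (T ξ)).mpr (hph' ξ)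
    have hdeq : dist w (f Ψ) = dist w (f Ψ₀) := by
      have h1 : dist w (f Ψ) ^ 2 = dist w (f Ψ₀) ^ 2 := by
        rw [hd2, hd2]
        simp only [hre, hoptre]
      nlinarith [dist_nonneg (x := w) (y := f Ψ), dist_nonneg (x := w) (y := f Ψ₀),
        hle Ψ]
    rw [hu]
    exact ⟨(hmem (f Ψ)).mpr ⟨Ψ, rfl⟩, hdeq⟩
end
end

section
/- Let H be a finite-dimensional real or complex Hilbert space, let Ω ⊆ H be a closed set that is prox-regular at a point x̂ ∈ Ω, and let p ≥ 2 be an integer. Then the set {(x, x, …, x) ∈ H^p : x ∈ Ω} (p identical copies) is prox-regular at (x̂, x̂, …, x̂), where H^p carries the product Hilbert space structure. -/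
noncomputable section

/-- A set `Ω` is prox-regular at `xhat ∈ Ω` if the projector `P_Ω` is single-valued
(every point has exactly one nearest point in `Ω`) on some neighborhood of `xhat`. -/
def ProxRegularAt {E : Type*} [NormedAddCommGroup E] (Ω : Set E) (xhat : E) : Prop :=
  ∃ U ∈ nhds xhat, ∀ x ∈ U, ∃! w, w ∈ proj Ω x

private lemma diag_key {𝕜 : Type*} [RCLike 𝕜] {E : Type*} [NormedAddCommGroup E]
    [InnerProductSpace 𝕜 E] {p : ℕ} (hp : 0 < p) (u : Fin p → E) (x : E) :
    ∑ k, ‖u k - x‖ ^ 2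
      = (∑ k, ‖u k - (p : 𝕜)⁻¹ • ∑ j, u j‖ ^ 2)
        + p * ‖(p : 𝕜)⁻¹ • (∑ j, u j) - x‖ ^ 2 := by
  have hpK : (p : 𝕜) ≠ 0 := Nat.cast_ne_zero.mpr hp.ne'
  set m : E := (p : 𝕜)⁻¹ • ∑ j, u j with hm
  have hsum0 : ∑ k : Fin p, (u k - m) = 0 := by
    rw [Finset.sum_sub_distrib, Finset.sum_const, Finset.card_univ, Fintype.card_fin,
      ← Nat.cast_smul_eq_nsmul 𝕜, hm, smul_smul, mul_inv_cancel₀ hpK, one_smul, sub_self]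
  calc ∑ k, ‖u k - x‖ ^ 2 = ∑ k, ‖(u k - m) + (m - x)‖ ^ 2 := by
        simp [sub_add_sub_cancel]
    _ = ∑ k, (‖u k - m‖ ^ 2 + 2 * RCLike.re (inner (𝕜 := 𝕜) (u k - m) (m - x))
          + ‖m - x‖ ^ 2) := by
        refine Finset.sum_congr rfl fun k _ => ?_
        exact norm_add_sq (𝕜 := 𝕜) _ _
    _ = (∑ k, ‖u k - m‖ ^ 2)
          + 2 * RCLike.re (inner (𝕜 := 𝕜) (∑ k : Fin p, (u k - m)) (m - x))
          + ∑ k : Fin p, ‖m - x‖ ^ 2 := by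
        rw [Finset.sum_add_distrib, Finset.sum_add_distrib, sum_inner, map_sum,
          Finset.mul_sum]
    _ = (∑ k, ‖u k - m‖ ^ 2) + p * ‖m - x‖ ^ 2 := by
        rw [hsum0, inner_zero_left]
        simp [Finset.sum_const, Finset.card_univ, nsmul_eq_mul]

/-- If a closed set `Ω` in a finite-dimensional Hilbert space is
prox-regular at `xhat ∈ Ω`, then the diagonal set `{(x,…,x) ∈ H^p : x ∈ Ω}` (`p ≥ 2` copies)
is prox-regular at `(xhat,…,xhat)` in the product Hilbert space `H^p`. -/
theorem proxRegularAt_diagonal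
    {𝕜 : Type*} [RCLike 𝕜] {E : Type*} [NormedAddCommGroup E] [InnerProductSpace 𝕜 E]
    [FiniteDimensional 𝕜 E]
    (Ω : Set E) (hclosed : IsClosed Ω) (xhat : E) (hxhat : xhat ∈ Ω)
    (hprox : ProxRegularAt Ω xhat)
    (p : ℕ) (hp : 2 ≤ p) :
    ProxRegularAt {u : PiLp 2 (fun _ : Fin p => E) | ∃ x ∈ Ω, ∀ k, u k = x}
      ((WithLp.toLp 2 (fun _ => xhat) : PiLp 2 (fun _ : Fin p => E))) := by
  obtain ⟨V, hV, hVuniq⟩ := hprox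
  have hp0 : 0 < p := lt_of_lt_of_le two_pos hp
  have hpK : (p : 𝕜) ≠ 0 := Nat.cast_ne_zero.mpr hp0.ne'
  set D : Set (PiLp 2 fun _ : Fin p => E) := {u | ∃ x ∈ Ω, ∀ k, u k = x} with hD
  set avg : PiLp 2 (fun _ : Fin p => E) → E := fun u => (p : 𝕜)⁻¹ • ∑ j, u j with havg
  have havgcont : Continuous avg := by
    apply Continuous.const_smul
    exact continuous_finset_sum _ fun j _ =>
      (continuous_apply j).comp (PiLp.continuous_ofLp 2 _)
  have havgdiag : ∀ x : E, avg (WithLp.toLp 2 (fun _ => x) : PiLp 2 fun _ : Fin p => E) = x := by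
    intro x
    simp only [havg, PiLp.toLp_apply, Finset.sum_const, Finset.card_univ, Fintype.card_fin,
      ← Nat.cast_smul_eq_nsmul 𝕜, smul_smul, inv_mul_cancel₀ hpK, one_smul]
  refine ⟨avg ⁻¹' V, havgcont.continuousAt.preimage_mem_nhds (by rw [havgdiag]; exact hV), ?_⟩
  intro u hu
  obtain ⟨w, ⟨hwΩ, hwdist⟩, hwuniq⟩ := hVuniq (avg u) hu
  set m : E := avg u with hm
  have key : ∀ x : E, dist u (WithLp.toLp 2 (fun _ => x) : PiLp 2 fun _ : Fin p => E)
      = Real.sqrt ((∑ k, ‖u k - m‖ ^ 2) + p * ‖m - x‖ ^ 2) := by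
    intro x
    rw [PiLp.dist_eq_of_L2]
    congr 1
    simp_rw [dist_eq_norm]
    exact diag_key hp0 u x
  set φw : PiLp 2 (fun _ : Fin p => E) := WithLp.toLp 2 (fun _ => w) with hφw
  have hφwD : φw ∈ D := ⟨w, hwΩ, fun _ => rfl⟩
  have hle : ∀ v ∈ D, dist u φw ≤ dist u v := by
    rintro v ⟨x, hxΩ, hvx⟩
    have hvd : v = (WithLp.toLp 2 (fun _ => x) : PiLp 2 fun _ : Fin p => E) := PiLp.ext hvx
    rw [hvd, key, key]
    apply Real.sqrt_le_sqrt
    have h1 : ‖m - w‖ ≤ ‖m - x‖ := by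
      rw [← dist_eq_norm, ← dist_eq_norm, hwdist]
      exact Metric.infDist_le_dist_of_mem hxΩ
    gcongr
  have hinf : dist u φw = Metric.infDist u D := by
    refine le_antisymm ?_ (Metric.infDist_le_dist_of_mem hφwD)
    rw [Metric.infDist_eq_iInf]
    haveI : Nonempty ↥D := ⟨⟨φw, hφwD⟩⟩
    exact le_ciInf fun y => hle y y.2
  refine ⟨φw, ⟨hφwD, hinf⟩, ?_⟩
  rintro v ⟨⟨x, hxΩ, hvx⟩, hvdist⟩
  have hvd : v = (WithLp.toLp 2 (fun _ => x) : PiLp 2 fun _ : Fin p => E) := PiLp.ext hvx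
  have hdeq : dist u v = dist u φw := by rw [hvdist, hinf]
  rw [hvd, key, key] at hdeq
  have hxw : ‖m - x‖ = ‖m - w‖ := by
    have h2 : (∑ k, ‖u k - m‖ ^ 2) + p * ‖m - x‖ ^ 2
        = (∑ k, ‖u k - m‖ ^ 2) + p * ‖m - w‖ ^ 2 := by
      have hnn : ∀ y : E, (0:ℝ) ≤ (∑ k, ‖u k - m‖ ^ 2) + p * ‖m - y‖ ^ 2 := by
        intro y; positivity
      exact (Real.sqrt_inj (hnn x) (hnn w)).mp hdeq
    have h3 : ‖m - x‖ ^ 2 = ‖m - w‖ ^ 2 := by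
      have hpR : (p : ℝ) ≠ 0 := Nat.cast_ne_zero.mpr hp0.ne'
      have := add_left_cancel h2
      exact mul_left_cancel₀ hpR this
    nlinarith [norm_nonneg (m - x), norm_nonneg (m - w)]
  have hxproj : x ∈ proj Ω m := by
    refine ⟨hxΩ, ?_⟩
    rw [dist_eq_norm, hxw, ← dist_eq_norm, hwdist]
  rw [hvd, hwuniq x hxproj]
end
end

section
/- Let M : H → H be a unitary operator, let r ∈ ℝ^{n×n} with r[ξ] ≥ 0 for all pixels ξ, let S_r = {y ∈ H : ∑_{c∈I} |y_c[ξ]|² = r[ξ] for all ξ}, and let Ω = M⁻¹(S_r). Then Ω is prox-regular at every point x̂ ∈ Ω such that (M x̂)[ξ] ≠ 0 for every pixel ξ (equivalently, such that the function G(x̂)[ξ] = √(∑_{c∈I} |(M x̂)_c[ξ]|²) is nonzero at every pixel). -/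
noncomputable section

/-- A complex number whose real part equals its norm is real (and nonnegative). -/
lemma aux_re_eq_norm {z : ℂ} (h : z.re = ‖z‖) : z = (z.re : ℂ) := by
  have h1 : ‖z‖ ^ 2 = z.re ^ 2 + z.im ^ 2 := by
    rw [Complex.sq_norm, Complex.normSq_apply]; ring
  have h2 : z.re ^ 2 = ‖z‖ ^ 2 := by rw [h]
  have h3 : z.im ^ 2 = 0 := by linarith
  have him : z.im = 0 := by nlinarith [h3]
  exact Complex.ext rfl him

/-- Key per-pixel fact: projection onto a sphere from a nonzero point. -/
lemma pixel_key {F : Type*} [NormedAddCommGroup F] [InnerProductSpace ℂ F]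
    (a : F) (ha : a ≠ 0) (ρ : ℝ) (hρ : 0 ≤ ρ) (w : F) (hw : ‖w‖ = ρ) :
    ‖a - ((ρ / ‖a‖ : ℝ) : ℂ) • a‖ ^ 2 ≤ ‖a - w‖ ^ 2 ∧
      (‖a - w‖ ^ 2 = ‖a - ((ρ / ‖a‖ : ℝ) : ℂ) • a‖ ^ 2 → w = ((ρ / ‖a‖ : ℝ) : ℂ) • a) := by
  set t : ℝ := ‖a‖ with ht
  have htpos : 0 < t := norm_pos_iff.mpr ha
  have hp : ‖a - ((ρ / t : ℝ) : ℂ) • a‖ ^ 2 = (t - ρ) ^ 2 := by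
    have : a - ((ρ / t : ℝ) : ℂ) • a = ((1 - ρ / t : ℝ) : ℂ) • a := by
      push_cast
      rw [sub_smul, one_smul]
    rw [this, norm_smul]
    simp only [Complex.norm_real, Real.norm_eq_abs]
    rw [← ht, mul_pow, sq_abs]
    field_simp
  have hw2 : ‖a - w‖ ^ 2 = t ^ 2 - 2 * (inner ℂ a w).re + ρ ^ 2 := by
    rw [norm_sub_sq (𝕜 := ℂ), hw]
    norm_num
    rw [ht]
  have hCS : ‖(inner ℂ a w)‖ ≤ t * ρ := by
    have := norm_inner_le_norm (𝕜 := ℂ) a w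
    rwa [hw, ← ht] at this
  have hre : (inner ℂ a w).re ≤ t * ρ :=
    le_trans (Complex.re_le_norm _) hCS
  constructor
  · rw [hp, hw2]; nlinarith
  · intro heq
    rw [hp, hw2] at heq
    have hre2 : (inner ℂ a w).re = t * ρ := by nlinarith
    have hz : (inner ℂ a w) = ((t * ρ : ℝ) : ℂ) := by
      have hnorm : ‖(inner ℂ a w)‖ = (inner ℂ a w).re := by
        refine le_antisymm ?_ (Complex.re_le_norm _)
        rw [hre2]; exact hCS
      have := aux_re_eq_norm hnorm.symm
      rw [this, hre2]
    have : ((ρ : ℝ) : ℂ) • a = ((t : ℝ) : ℂ) • w := by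
      have h2 : (inner ℂ a w) = (↑‖a‖ : ℂ) * ↑‖w‖ := by
        rw [hz, hw, ← ht]; push_cast; ring
      have := (inner_eq_norm_mul_iff (𝕜 := ℂ)).mp h2
      rwa [hw, ← ht] at this
    have htne : ((t : ℝ) : ℂ) ≠ 0 := by
      simp only [ne_eq, Complex.ofReal_eq_zero]; exact ne_of_gt htpos
    have : w = (((t : ℝ) : ℂ))⁻¹ • (((ρ : ℝ) : ℂ) • a) := by
      rw [this, ← smul_assoc, smul_eq_mul, inv_mul_cancel₀ htne, one_smul]
    rw [this, ← smul_assoc]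
    congr 1
    push_cast
    field_simp
    rw [smul_eq_mul, ← mul_assoc, mul_one_div_cancel htne, one_mul]

/-- For a unitary `M` on `H` and entrywise nonnegative `r`, the set
`Ω = M⁻¹(S_r)` is prox-regular at every point `xhat ∈ Ω` such that `(M xhat)[ξ] ≠ 0`
for every pixel `ξ`. -/
theorem proxRegularAt_Omega_d (n : ℕ) (hn : 1 ≤ n)
    (M : H n ≃ₗᵢ[ℂ] H n)
    (r : Fin n × Fin n → ℝ) (hr : ∀ ξ, 0 ≤ r ξ)
    (Sr : Set (H n))
    (hSr : Sr = {y : H n | ∀ ξ, ∑ c : Fin 6, ‖y (c, ξ)‖ ^ 2 = r ξ})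
    (Ω : Set (H n)) (hΩ : Ω = M ⁻¹' Sr)
    (xhat : H n) (hxhat : xhat ∈ Ω)
    (hnz : ∀ ξ, ∃ c, (M xhat) (c, ξ) ≠ 0) :
    ProxRegularAt Ω xhat := by
  subst hSr hΩ
  classical
  -- the pixel extraction map
  let pix : H n → (Fin n × Fin n) → EuclideanSpace ℂ (Fin 6) :=
    fun z ξ => WithLp.toLp 2 (fun c => z (c, ξ))
  have pix_apply : ∀ (z : H n) ξ c, pix z ξ c = z (c, ξ) := fun _ _ _ => rfl
  have pix_sub : ∀ (z w : H n) ξ, pix z ξ - pix w ξ = pix (z - w) ξ := by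
    intro z w ξ; ext c; rfl
  -- norm of a pixel
  have pix_norm_sq : ∀ (z : H n) ξ, ‖pix z ξ‖ ^ 2 = ∑ c : Fin 6, ‖z (c, ξ)‖ ^ 2 := by
    intro z ξ
    rw [EuclideanSpace.norm_eq, Real.sq_sqrt]
    exact Finset.sum_nonneg fun c _ => sq_nonneg _
  -- distance decomposes over pixels
  have dist_sq : ∀ (z w : H n), dist z w ^ 2 = ∑ ξ, ‖pix z ξ - pix w ξ‖ ^ 2 := by
    intro z w
    rw [EuclideanSpace.dist_eq, Real.sq_sqrt (Finset.sum_nonneg fun _ _ => sq_nonneg _)]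
    rw [Fintype.sum_prod_type]
    rw [Finset.sum_comm]
    congr 1
    funext ξ
    rw [pix_sub, pix_norm_sq]
    congr 1
    funext c; rw [dist_eq_norm]; rfl
  -- membership in Sr in terms of pixel norms
  have mem_Sr : ∀ z : H n,
      z ∈ {y : H n | ∀ ξ, ∑ c : Fin 6, ‖y (c, ξ)‖ ^ 2 = r ξ} ↔
        ∀ ξ, ‖pix z ξ‖ = Real.sqrt (r ξ) := by
    intro z
    constructor
    · intro hz ξ
      rw [← hz ξ, ← pix_norm_sq, Real.sqrt_sq (norm_nonneg _)]
    · intro hz ξ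
      rw [← pix_norm_sq, hz ξ, Real.sq_sqrt (hr ξ)]
  -- the neighborhood
  refine ⟨{x | ∀ ξ, ∃ c, M x (c, ξ) ≠ 0}, ?_, ?_⟩
  · have hopen : IsOpen {x : H n | ∀ ξ, ∃ c, M x (c, ξ) ≠ 0} := by
      have : {x : H n | ∀ ξ, ∃ c, M x (c, ξ) ≠ 0} =
          ⋂ ξ, ⋃ c, (fun x : H n => M x (c, ξ)) ⁻¹' {(0 : ℂ)}ᶜ := by
        ext x; simp
      rw [this]
      refine isOpen_iInter_of_finite fun ξ => isOpen_iUnion fun c => ?_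
      exact (isOpen_compl_singleton).preimage
        ((EuclideanSpace.proj (𝕜 := ℂ) (c, ξ)).continuous.comp M.continuous)
    exact hopen.mem_nhds hnz
  · intro x hx
    set y : H n := M x with hy
    have ha : ∀ ξ, pix y ξ ≠ 0 := by
      intro ξ h0
      obtain ⟨c, hc⟩ := hx ξ
      exact hc (congrArg (fun v : EuclideanSpace ℂ (Fin 6) => v c) h0)
    set ρ : Fin n × Fin n → ℝ := fun ξ => Real.sqrt (r ξ) with hρdef
    -- the projection in the transformed domain
    set Py : H n := WithLp.toLp 2 (fun p : Fin 6 × Fin n × Fin n =>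
      ((ρ p.2 / ‖pix y p.2‖ : ℝ) : ℂ) * y p : (Fin 6 × Fin n × Fin n) → ℂ) with hPy
    have pix_Py : ∀ ξ, pix Py ξ = ((ρ ξ / ‖pix y ξ‖ : ℝ) : ℂ) • pix y ξ := by
      intro ξ; ext c; rfl
    have hPy_mem : Py ∈ {z : H n | ∀ ξ, ∑ c : Fin 6, ‖z (c, ξ)‖ ^ 2 = r ξ} := by
      rw [mem_Sr]
      intro ξ
      rw [pix_Py, norm_smul]
      simp only [Complex.norm_real, Real.norm_eq_abs]
      rw [abs_of_nonneg (div_nonneg (Real.sqrt_nonneg _) (norm_nonneg _))]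
      rw [div_mul_cancel₀ _ (norm_ne_zero_iff.mpr (ha ξ))]
    -- the candidate projection point
    set w₀ : H n := M.symm Py with hw₀
    have hMw₀ : M w₀ = Py := M.apply_symm_apply Py
    have hdxw : ∀ w : H n, dist x w = dist y (M w) := fun w => (M.dist_map x w).symm
    have hw₀mem : w₀ ∈ M ⁻¹' {z : H n | ∀ ξ, ∑ c : Fin 6, ‖z (c, ξ)‖ ^ 2 = r ξ} := by
      simp only [Set.mem_preimage, hMw₀]; exact hPy_mem
    -- key inequality
    have hkey : ∀ w ∈ {z : H n | ∀ ξ, ∑ c : Fin 6, ‖z (c, ξ)‖ ^ 2 = r ξ},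
        dist y Py ≤ dist y w ∧ (dist y w = dist y Py → w = Py) := by
      intro w hw
      have hwn := (mem_Sr w).mp hw
      have hterm : ∀ ξ, ‖pix y ξ - pix Py ξ‖ ^ 2 ≤ ‖pix y ξ - pix w ξ‖ ^ 2 := by
        intro ξ
        rw [pix_Py]
        exact (pixel_key (pix y ξ) (ha ξ) (ρ ξ) (Real.sqrt_nonneg _) (pix w ξ) (hwn ξ)).1
      have hsq : dist y Py ^ 2 ≤ dist y w ^ 2 := by
        rw [dist_sq, dist_sq]
        exact Finset.sum_le_sum fun ξ _ => hterm ξ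
      have hle : dist y Py ≤ dist y w :=
        (pow_le_pow_iff_left₀ dist_nonneg dist_nonneg two_ne_zero).mp hsq
      refine ⟨hle, fun heq => ?_⟩
      have hsum : ∑ ξ, ‖pix y ξ - pix Py ξ‖ ^ 2 = ∑ ξ, ‖pix y ξ - pix w ξ‖ ^ 2 := by
        rw [← dist_sq, ← dist_sq, heq]
      have hall := (Finset.sum_eq_sum_iff_of_le (fun ξ _ => hterm ξ)).mp hsum
      have hpixeq : ∀ ξ, pix w ξ = pix Py ξ := by
        intro ξ
        rw [pix_Py]
        refine (pixel_key (pix y ξ) (ha ξ) (ρ ξ) (Real.sqrt_nonneg _) (pix w ξ) (hwn ξ)).2 ?_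
        rw [← pix_Py]
        exact (hall ξ (Finset.mem_univ ξ)).symm
      ext p
      have := congrArg (fun v : EuclideanSpace ℂ (Fin 6) => v p.1) (hpixeq p.2)
      simpa [pix_apply] using this
    -- infDist computation
    have hinf : Metric.infDist x (M ⁻¹' {z : H n | ∀ ξ, ∑ c : Fin 6, ‖z (c, ξ)‖ ^ 2 = r ξ})
        = dist y Py := by
      refine le_antisymm ?_ ?_
      · have h2 := Metric.infDist_le_dist_of_mem (x := x) hw₀mem
        rwa [hdxw w₀, hMw₀] at h2
      · by_contra h
        push_neg at h
        obtain ⟨w, hwmem, hwd⟩ := (Metric.infDist_lt_iff ⟨w₀, hw₀mem⟩).mp h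
        have h3 : dist y Py ≤ dist x w := by
          rw [hdxw w]
          exact (hkey (M w) hwmem).1
        linarith
    refine ⟨w₀, ⟨hw₀mem, ?_⟩, ?_⟩
    · rw [hinf, hdxw w₀, hMw₀]
    · rintro w ⟨hwmem, hwd⟩
      rw [hinf, hdxw w] at hwd
      have := (hkey (M w) hwmem).2 hwd
      have : w = M.symm Py := by
        rw [← this, M.symm_apply_apply]
      rw [this]
end
end

section
/- Let E_c ∈ ℝ^{n×n} (c ∈ I) satisfy ∑_{c∈I} E_c[ξ]² = 2 at every pixel ξ, let A ∈ ℝ^{n×n} have strictly positive entries, and let χ = {(E_c ⊙ A ⊙ e^{iΦ})_{c∈I} : Φ ∈ ℝ^{n×n}} ⊆ H. Then χ is prox-regular at every one of its points; moreover, for x̂ ∈ χ, the projector P_χ is single-valued on the neighborhood U_χ = { x̂ + (r_c)_{c∈I} ∈ H : √(∑_{c∈I} |r_c[ξ]|²) < √2·A[ξ] for every pixel ξ }. -/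
noncomputable section

/-! ### Auxiliary lemmas -/

lemma aux_abs_exp (θ : ℝ) : ‖Complex.exp (Complex.I * θ)‖ = 1 := by
  rw [mul_comm]; exact Complex.norm_exp_ofReal_mul_I θ

lemma aux_conj_exp (θ : ℝ) :
    (starRingEnd ℂ) (Complex.exp (Complex.I * θ)) = Complex.exp (-(Complex.I * θ)) := by
  rw [← Complex.exp_conj]
  congr 1
  simp [Complex.conj_ofReal]

/-- The optimal unit phase attains `|z|` exactly. -/
lemma aux_opt (z : ℂ) :
    (starRingEnd ℂ) (Complex.exp (Complex.I * z.arg)) * z = ((‖z‖ : ℝ) : ℂ) := by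
  rw [aux_conj_exp]
  have h := Complex.norm_mul_exp_arg_mul_I z
  calc Complex.exp (-(Complex.I * (z.arg : ℂ))) * z
      = Complex.exp (-(Complex.I * (z.arg : ℂ)))
        * ((‖z‖ : ℂ) * Complex.exp ((z.arg : ℂ) * Complex.I)) := by rw [h]
    _ = (‖z‖ : ℂ)
        * Complex.exp (-(Complex.I * (z.arg : ℂ)) + (z.arg : ℂ) * Complex.I) := by
        rw [Complex.exp_add]; ring
    _ = (‖z‖ : ℂ) := by
        rw [show -(Complex.I * (z.arg : ℂ)) + (z.arg : ℂ) * Complex.I = 0 by ring,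
          Complex.exp_zero, mul_one]

lemma aux_re_le (p z : ℂ) (hp : ‖p‖ = 1) :
    ((starRingEnd ℂ) p * z).re ≤ ‖z‖ := by
  calc ((starRingEnd ℂ) p * z).re ≤ ‖(starRingEnd ℂ) p * z‖ := Complex.re_le_norm _
    _ = ‖z‖ := by rw [norm_mul, Complex.norm_conj, hp, one_mul]

/-- Equality case: if a unit phase attains `|z|` and `z ≠ 0`, the phase is unique. -/
lemma aux_eqcase (z p : ℂ) (hz : z ≠ 0) (hp : ‖p‖ = 1)
    (h : ((starRingEnd ℂ) p * z).re = ‖z‖) :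
    p = Complex.exp (Complex.I * z.arg) := by
  set q := (starRingEnd ℂ) p * z with hq
  have habs : ‖q‖ = ‖z‖ := by
    rw [hq, norm_mul, Complex.norm_conj, hp, one_mul]
  have hsq : q.re ^ 2 + q.im ^ 2 = (‖q‖) ^ 2 := by
    rw [Complex.sq_norm, Complex.normSq_apply]; ring
  have hre2 : q.re ^ 2 = ‖z‖ ^ 2 := by rw [h]
  have habs2 : ‖q‖ ^ 2 = ‖z‖ ^ 2 := by rw [habs]
  have him2 : q.im ^ 2 = 0 := by linarith [hsq, habs2, hre2]
  have him : q.im = 0 := by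
    have := sq_nonneg q.im
    nlinarith [him2]
  have hqz : q = ((‖z‖ : ℝ) : ℂ) := by
    apply Complex.ext
    · simpa using h
    · simpa using him
  have h2 : (starRingEnd ℂ) p * z = (starRingEnd ℂ) (Complex.exp (Complex.I * z.arg)) * z := by
    rw [← hq, hqz, aux_opt]
  have h3 : (starRingEnd ℂ) p = (starRingEnd ℂ) (Complex.exp (Complex.I * z.arg)) :=
    mul_right_cancel₀ hz h2
  have := congrArg (starRingEnd ℂ) h3
  simpa using this

/-- Cauchy–Schwarz in square-root form. -/
lemma aux_cs {ι : Type*} (s : Finset ι) (f g : ι → ℝ) (hf : ∀ i ∈ s, 0 ≤ f i)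
    (hg : ∀ i ∈ s, 0 ≤ g i) :
    ∑ i ∈ s, f i * g i ≤ Real.sqrt (∑ i ∈ s, f i ^ 2) * Real.sqrt (∑ i ∈ s, g i ^ 2) := by
  have h := Finset.sum_mul_sq_le_sq_mul_sq s f g
  have h0 : (0:ℝ) ≤ ∑ i ∈ s, f i * g i :=
    Finset.sum_nonneg fun i hi => mul_nonneg (hf i hi) (hg i hi)
  calc ∑ i ∈ s, f i * g i = Real.sqrt ((∑ i ∈ s, f i * g i) ^ 2) := (Real.sqrt_sq h0).symm
    _ ≤ Real.sqrt ((∑ i ∈ s, f i ^ 2) * ∑ i ∈ s, g i ^ 2) := Real.sqrt_le_sqrt h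
    _ = _ := Real.sqrt_mul (Finset.sum_nonneg fun i _ => sq_nonneg _) _

/-- If the amplitude `A` is strictly positive everywhere, the set
`χ = {(E_c ⊙ A ⊙ e^{iΦ})_c : Φ ∈ ℝ^{n×n}}` is prox-regular at every one of its points;
moreover, for `xhat ∈ χ`, the projector `P_χ` is single-valued on the neighborhood
`U_χ = {xhat + r : √(∑_c |r_c[ξ]|²) < √2·A[ξ] for every ξ}`. -/
theorem proxRegular_chi (n : ℕ) (hn : 1 ≤ n)
    (E : Fin 6 → Fin n × Fin n → ℝ)
    (hE : ∀ ξ, ∑ c : Fin 6, (E c ξ) ^ 2 = 2)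
    (A : Fin n × Fin n → ℝ) (hA : ∀ ξ, 0 < A ξ)
    (χ : Set (H n))
    (hχ : χ = {y : H n | ∃ Φ : Fin n × Fin n → ℝ,
      ∀ c ξ, y (c, ξ) = (E c ξ : ℂ) * (A ξ : ℂ) * Complex.exp (Complex.I * (Φ ξ : ℂ))}) :
    ∀ xhat ∈ χ,
      ProxRegularAt χ xhat ∧
      ({x : H n | ∀ ξ,
          Real.sqrt (∑ c : Fin 6, ‖x (c, ξ) - xhat (c, ξ)‖ ^ 2) < Real.sqrt 2 * A ξ}
        ∈ nhds xhat) ∧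
      (∀ x : H n,
        (∀ ξ, Real.sqrt (∑ c : Fin 6, ‖x (c, ξ) - xhat (c, ξ)‖ ^ 2) < Real.sqrt 2 * A ξ) →
          ∃! w, w ∈ proj χ x) := by
  intro xhat hxhat
  have hne : χ.Nonempty := ⟨xhat, hxhat⟩
  obtain ⟨Φhat, hΦhat⟩ : ∃ Φ : Fin n × Fin n → ℝ,
      ∀ c ξ, xhat (c, ξ) = (E c ξ : ℂ) * (A ξ : ℂ) * Complex.exp (Complex.I * (Φ ξ : ℂ)) := by
    rw [hχ] at hxhat; exact hxhat
  -- dist squared decomposition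
  have distsq : ∀ x y : H n, dist x y ^ 2
      = ∑ ξ : Fin n × Fin n, ∑ c : Fin 6, ‖x (c, ξ) - y (c, ξ)‖ ^ 2 := by
    intro x y
    rw [EuclideanSpace.dist_eq, Real.sq_sqrt (Finset.sum_nonneg fun i _ => sq_nonneg _)]
    rw [Fintype.sum_prod_type]
    rw [Finset.sum_comm]
    simp [dist_eq_norm]
  -- the key single-valuedness statement
  have key : ∀ x : H n,
      (∀ ξ, Real.sqrt (∑ c : Fin 6, ‖x (c, ξ) - xhat (c, ξ)‖ ^ 2) < Real.sqrt 2 * A ξ) →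
        ∃! w, w ∈ proj χ x := by
    intro x hU
    set z : Fin n × Fin n → ℂ := fun ξ => ∑ c : Fin 6, (E c ξ : ℂ) * x (c, ξ) with hzdef
    -- z never vanishes on U
    have hz : ∀ ξ, z ξ ≠ 0 := by
      intro ξ
      have hsplit : z ξ = 2 * (A ξ : ℂ) * Complex.exp (Complex.I * (Φhat ξ : ℂ))
          + ∑ c : Fin 6, (E c ξ : ℂ) * (x (c, ξ) - xhat (c, ξ)) := by
        have : ∀ c : Fin 6, (E c ξ : ℂ) * x (c, ξ)
            = (E c ξ : ℂ) * xhat (c, ξ) + (E c ξ : ℂ) * (x (c, ξ) - xhat (c, ξ)) := by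
          intro c; ring
        rw [hzdef]
        simp only [this]
        rw [Finset.sum_add_distrib]
        congr 1
        have : ∀ c : Fin 6, (E c ξ : ℂ) * xhat (c, ξ)
            = ((E c ξ ^ 2 : ℝ) : ℂ) * ((A ξ : ℂ) * Complex.exp (Complex.I * (Φhat ξ : ℂ))) := by
          intro c; rw [hΦhat c ξ]; push_cast; ring
        simp only [this]
        rw [← Finset.sum_mul]
        rw [show (∑ c : Fin 6, ((E c ξ ^ 2 : ℝ) : ℂ)) = ((∑ c : Fin 6, E c ξ ^ 2 : ℝ) : ℂ) by
          push_cast; ring]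
        rw [hE ξ]
        push_cast; ring
      have hb : ‖∑ c : Fin 6, (E c ξ : ℂ) * (x (c, ξ) - xhat (c, ξ))‖ < 2 * A ξ := by
        have h1 : ‖∑ c : Fin 6, (E c ξ : ℂ) * (x (c, ξ) - xhat (c, ξ))‖
            ≤ ∑ c : Fin 6, |E c ξ| * ‖x (c, ξ) - xhat (c, ξ)‖ := by
          calc ‖∑ c : Fin 6, (E c ξ : ℂ) * (x (c, ξ) - xhat (c, ξ))‖
              = ‖∑ c : Fin 6, (E c ξ : ℂ) * (x (c, ξ) - xhat (c, ξ))‖ := by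
                rfl
            _ ≤ ∑ c : Fin 6, ‖(E c ξ : ℂ) * (x (c, ξ) - xhat (c, ξ))‖ := norm_sum_le _ _
            _ = ∑ c : Fin 6, |E c ξ| * ‖x (c, ξ) - xhat (c, ξ)‖ := by
                simp [norm_mul, Complex.norm_real]
        have h2 : ∑ c : Fin 6, |E c ξ| * ‖x (c, ξ) - xhat (c, ξ)‖
            ≤ Real.sqrt (∑ c : Fin 6, |E c ξ| ^ 2)
              * Real.sqrt (∑ c : Fin 6, ‖x (c, ξ) - xhat (c, ξ)‖ ^ 2) :=
          aux_cs _ _ _ (fun i _ => abs_nonneg _) (fun i _ => norm_nonneg _)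
        have h3 : Real.sqrt (∑ c : Fin 6, |E c ξ| ^ 2) = Real.sqrt 2 := by
          congr 1
          simp only [sq_abs]
          exact hE ξ
        have h4 : Real.sqrt 2 * Real.sqrt (∑ c : Fin 6, ‖x (c, ξ) - xhat (c, ξ)‖ ^ 2)
            < Real.sqrt 2 * (Real.sqrt 2 * A ξ) :=
          mul_lt_mul_of_pos_left (hU ξ) (Real.sqrt_pos.2 two_pos)
        have h5 : Real.sqrt 2 * (Real.sqrt 2 * A ξ) = 2 * A ξ := by
          rw [← mul_assoc, Real.mul_self_sqrt (by norm_num : (0:ℝ) ≤ 2)]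
        calc ‖∑ c : Fin 6, (E c ξ : ℂ) * (x (c, ξ) - xhat (c, ξ))‖
            ≤ _ := h1
          _ ≤ _ := h2
          _ = Real.sqrt 2 * Real.sqrt (∑ c : Fin 6, ‖x (c, ξ) - xhat (c, ξ)‖ ^ 2) := by
              rw [h3]
          _ < 2 * A ξ := by rw [← h5]; exact h4
      intro hzero
      have ha : ‖2 * (A ξ : ℂ) * Complex.exp (Complex.I * (Φhat ξ : ℂ))‖
          = 2 * A ξ := by
        rw [norm_mul, norm_mul, aux_abs_exp]
        simp [abs_of_pos (hA ξ)]
      rw [hzero] at hsplit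
      have : (2 : ℂ) * (A ξ : ℂ) * Complex.exp (Complex.I * (Φhat ξ : ℂ))
          = -(∑ c : Fin 6, (E c ξ : ℂ) * (x (c, ξ) - xhat (c, ξ))) := by
        linear_combination -hsplit
      rw [this] at ha
      rw [norm_neg] at ha
      linarith [hb, ha.ge, ha.le]
    -- the expansion of the per-pixel objective
    have expand : ∀ (ξ : Fin n × Fin n) (p : ℂ), ‖p‖ = 1 →
        ∑ c : Fin 6, ‖x (c, ξ) - (E c ξ : ℂ) * (A ξ : ℂ) * p‖ ^ 2
          = (∑ c : Fin 6, Complex.normSq (x (c, ξ))) + 2 * A ξ ^ 2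
            - 2 * A ξ * ((starRingEnd ℂ) p * z ξ).re := by
      intro ξ p hp
      have hterm : ∀ c : Fin 6, ‖x (c, ξ) - (E c ξ : ℂ) * (A ξ : ℂ) * p‖ ^ 2
          = Complex.normSq (x (c, ξ)) + E c ξ ^ 2 * A ξ ^ 2
            - 2 * (E c ξ * A ξ * ((starRingEnd ℂ) p * x (c, ξ)).re) := by
        intro c
        rw [Complex.sq_norm, Complex.normSq_sub]
        have h1 : Complex.normSq ((E c ξ : ℂ) * (A ξ : ℂ) * p) = E c ξ ^ 2 * A ξ ^ 2 := by
          rw [Complex.normSq_mul, Complex.normSq_mul, Complex.normSq_ofReal,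
            Complex.normSq_ofReal, ← Complex.sq_norm, hp]
          ring
        have h2 : x (c, ξ) * (starRingEnd ℂ) ((E c ξ : ℂ) * (A ξ : ℂ) * p)
            = ((E c ξ * A ξ : ℝ) : ℂ) * ((starRingEnd ℂ) p * x (c, ξ)) := by
          rw [map_mul, map_mul, Complex.conj_ofReal, Complex.conj_ofReal]
          push_cast; ring
        rw [h1, h2, Complex.re_ofReal_mul]
        try ring
      rw [Finset.sum_congr rfl fun c _ => hterm c]
      have hzre : 2 * A ξ * ((starRingEnd ℂ) p * z ξ).re
          = ∑ c : Fin 6, 2 * (E c ξ * A ξ * ((starRingEnd ℂ) p * x (c, ξ)).re) := by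
        rw [hzdef]
        simp only [Finset.mul_sum]
        rw [Complex.re_sum, Finset.mul_sum]
        refine Finset.sum_congr rfl fun c _ => ?_
        rw [show (starRingEnd ℂ) p * ((E c ξ : ℂ) * x (c, ξ))
            = (E c ξ : ℂ) * ((starRingEnd ℂ) p * x (c, ξ)) by ring, Complex.re_ofReal_mul]
        ring
      have hsumE : ∑ c : Fin 6, E c ξ ^ 2 * A ξ ^ 2 = 2 * A ξ ^ 2 := by
        rw [← Finset.sum_mul, hE ξ]
      rw [Finset.sum_sub_distrib, Finset.sum_add_distrib, hsumE, hzre]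
    -- distances to members of χ
    have distχ : ∀ y : H n, ∀ Φ : Fin n × Fin n → ℝ,
        (∀ c ξ, y (c, ξ) = (E c ξ : ℂ) * (A ξ : ℂ) * Complex.exp (Complex.I * (Φ ξ : ℂ))) →
        dist x y ^ 2 = ∑ ξ : Fin n × Fin n,
          ((∑ c : Fin 6, Complex.normSq (x (c, ξ))) + 2 * A ξ ^ 2
            - 2 * A ξ * ((starRingEnd ℂ) (Complex.exp (Complex.I * (Φ ξ : ℂ))) * z ξ).re) := by
      intro y Φ hy
      rw [distsq]
      refine Finset.sum_congr rfl fun ξ _ => ?_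
      rw [← expand ξ _ (aux_abs_exp (Φ ξ))]
      refine Finset.sum_congr rfl fun c _ => ?_
      rw [hy c ξ]
    -- the projection candidate
    set w : H n := WithLp.toLp 2 (fun q : Fin 6 × Fin n × Fin n =>
      (E q.1 q.2 : ℂ) * (A q.2 : ℂ) * Complex.exp (Complex.I * ((z q.2).arg : ℂ))) with hwdef
    have hwformula : ∀ c ξ, w (c, ξ)
        = (E c ξ : ℂ) * (A ξ : ℂ) * Complex.exp (Complex.I * (((fun ξ => (z ξ).arg) ξ : ℝ) : ℂ)) :=
      fun c ξ => rfl
    have hwχ : w ∈ χ := by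
      rw [hχ]; exact ⟨fun ξ => (z ξ).arg, hwformula⟩
    -- optimal value per pixel
    have hwopt : ∀ ξ, ((starRingEnd ℂ) (Complex.exp (Complex.I * (((z ξ).arg : ℝ) : ℂ))) * z ξ).re
        = ‖z ξ‖ := by
      intro ξ
      rw [aux_opt (z ξ)]
      exact Complex.ofReal_re _
    -- minimality
    have hmin : ∀ y ∈ χ, dist x w ≤ dist x y := by
      intro y hy
      rw [hχ] at hy
      obtain ⟨Φ, hΦ⟩ := hy
      have h1 : dist x w ^ 2 ≤ dist x y ^ 2 := by
        rw [distχ w _ hwformula, distχ y Φ hΦ]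
        refine Finset.sum_le_sum fun ξ _ => ?_
        have := aux_re_le (Complex.exp (Complex.I * (Φ ξ : ℂ))) (z ξ) (aux_abs_exp (Φ ξ))
        have h2 := hwopt ξ
        have hAξ := (hA ξ).le
        nlinarith
      calc dist x w = Real.sqrt (dist x w ^ 2) := (Real.sqrt_sq dist_nonneg).symm
        _ ≤ Real.sqrt (dist x y ^ 2) := Real.sqrt_le_sqrt h1
        _ = dist x y := Real.sqrt_sq dist_nonneg
    have hproj : w ∈ proj χ x := by
      constructor
      · exact hwχ
      · refine le_antisymm ?_ (Metric.infDist_le_dist_of_mem hwχ)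
        by_contra hlt
        push_neg at hlt
        obtain ⟨y, hy, hdy⟩ := (Metric.infDist_lt_iff hne).1 hlt
        exact absurd (hmin y hy) (not_le.2 hdy)
    refine ⟨w, hproj, ?_⟩
    -- uniqueness
    intro w' hw'
    obtain ⟨hw'χ, hw'dist⟩ := hw'
    have hΦ' : ∃ Φ : Fin n × Fin n → ℝ,
        ∀ c ξ, w' (c, ξ) = (E c ξ : ℂ) * (A ξ : ℂ) * Complex.exp (Complex.I * (Φ ξ : ℂ)) := by
      rw [hχ] at hw'χ; exact hw'χ
    obtain ⟨Φ', hΦ'⟩ := hΦ'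
    have hdisteq : dist x w' = dist x w := by rw [hw'dist, hproj.2]
    have hsqeq : dist x w' ^ 2 = dist x w ^ 2 := by rw [hdisteq]
    rw [distχ w' Φ' hΦ', distχ w _ hwformula] at hsqeq
    -- termwise equality
    have hterm : ∀ ξ : Fin n × Fin n,
        ((starRingEnd ℂ) (Complex.exp (Complex.I * (Φ' ξ : ℂ))) * z ξ).re
          = ‖z ξ‖ := by
      have hsums : ∑ ξ : Fin n × Fin n, 2 * A ξ *
            ((starRingEnd ℂ) (Complex.exp (Complex.I * (Φ' ξ : ℂ))) * z ξ).re
          = ∑ ξ : Fin n × Fin n, 2 * A ξ * ‖z ξ‖ := by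
        simp only [Finset.sum_sub_distrib] at hsqeq
        have h3 : ∑ ξ : Fin n × Fin n, 2 * A ξ *
              ((starRingEnd ℂ) (Complex.exp (Complex.I * (((z ξ).arg : ℝ) : ℂ))) * z ξ).re
            = ∑ ξ : Fin n × Fin n, 2 * A ξ * ‖z ξ‖ :=
          Finset.sum_congr rfl fun ξ _ => by rw [hwopt ξ]
        linarith [hsqeq, h3]
      have hte : ∀ ξ ∈ (Finset.univ : Finset (Fin n × Fin n)),
          (0:ℝ) ≤ 2 * A ξ * (‖z ξ‖
            - ((starRingEnd ℂ) (Complex.exp (Complex.I * (Φ' ξ : ℂ))) * z ξ).re) := by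
        intro ξ _
        have := aux_re_le (Complex.exp (Complex.I * (Φ' ξ : ℂ))) (z ξ) (aux_abs_exp (Φ' ξ))
        have hAξ := (hA ξ).le
        nlinarith
      have hsum0 : ∑ ξ : Fin n × Fin n, 2 * A ξ * (‖z ξ‖
          - ((starRingEnd ℂ) (Complex.exp (Complex.I * (Φ' ξ : ℂ))) * z ξ).re) = 0 := by
        have hsplit2 : ∑ ξ : Fin n × Fin n, 2 * A ξ * (‖z ξ‖
            - ((starRingEnd ℂ) (Complex.exp (Complex.I * (Φ' ξ : ℂ))) * z ξ).re)
            = ∑ ξ : Fin n × Fin n, 2 * A ξ * ‖z ξ‖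
              - ∑ ξ : Fin n × Fin n, 2 * A ξ *
                ((starRingEnd ℂ) (Complex.exp (Complex.I * (Φ' ξ : ℂ))) * z ξ).re := by
          rw [← Finset.sum_sub_distrib]
          exact Finset.sum_congr rfl fun ξ _ => by ring
        rw [hsplit2, hsums, sub_self]
      have h9 := (Finset.sum_eq_zero_iff_of_nonneg hte).1 hsum0
      intro ξ
      have h4 := h9 ξ (Finset.mem_univ ξ)
      have hAξ := hA ξ
      nlinarith [h4]
    -- conclude w' = w
    ext q
    obtain ⟨c, ξ⟩ := q
    rw [hΦ' c ξ, hwformula c ξ]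
    have := aux_eqcase (z ξ) (Complex.exp (Complex.I * (Φ' ξ : ℂ))) (hz ξ)
      (aux_abs_exp (Φ' ξ)) (hterm ξ)
    rw [this]
  -- the neighborhood fact
  have hUnhds : {x : H n | ∀ ξ,
      Real.sqrt (∑ c : Fin 6, ‖x (c, ξ) - xhat (c, ξ)‖ ^ 2) < Real.sqrt 2 * A ξ}
      ∈ nhds xhat := by
    have hne' : Nonempty (Fin n × Fin n) := ⟨(⟨0, hn⟩, ⟨0, hn⟩)⟩
    set ε : ℝ := Finset.univ.inf' (Finset.univ_nonempty) (fun ξ => Real.sqrt 2 * A ξ) with hε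
    have hεpos : 0 < ε := by
      rw [hε, Finset.lt_inf'_iff]
      intro ξ _
      exact mul_pos (Real.sqrt_pos.2 two_pos) (hA ξ)
    refine Filter.mem_of_superset (Metric.ball_mem_nhds xhat hεpos) ?_
    intro x hx ξ
    have h1 : ∑ c : Fin 6, ‖x (c, ξ) - xhat (c, ξ)‖ ^ 2
        ≤ ∑ ξ' : Fin n × Fin n, ∑ c : Fin 6, ‖x (c, ξ') - xhat (c, ξ')‖ ^ 2 := by
      refine Finset.single_le_sum (f := fun ξ' => ∑ c : Fin 6, ‖x (c, ξ') - xhat (c, ξ')‖ ^ 2)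
        (fun ξ' _ => Finset.sum_nonneg fun c _ => sq_nonneg _) (Finset.mem_univ ξ)
    have h2 : Real.sqrt (∑ c : Fin 6, ‖x (c, ξ) - xhat (c, ξ)‖ ^ 2) ≤ dist x xhat := by
      have h3 : dist x xhat = Real.sqrt (∑ ξ' : Fin n × Fin n,
          ∑ c : Fin 6, ‖x (c, ξ') - xhat (c, ξ')‖ ^ 2) := by
        have := distsq x xhat
        rw [show dist x xhat = Real.sqrt (dist x xhat ^ 2) from (Real.sqrt_sq dist_nonneg).symm,
          this]
      rw [h3]
      exact Real.sqrt_le_sqrt h1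
    have h4 : ε ≤ Real.sqrt 2 * A ξ := Finset.inf'_le _ (Finset.mem_univ ξ)
    calc Real.sqrt (∑ c : Fin 6, ‖x (c, ξ) - xhat (c, ξ)‖ ^ 2)
        ≤ dist x xhat := h2
      _ < ε := Metric.mem_ball.1 hx
      _ ≤ Real.sqrt 2 * A ξ := h4
  refine ⟨⟨_, hUnhds, fun x hx => key x hx⟩, hUnhds, key⟩
end
end

section
/- Let E_c ∈ ℝ^{n×n} (c ∈ I) satisfy ∑_{c∈I} E_c[ξ]² = 2 at every pixel ξ, let A ∈ ℝ^{n×n} have strictly positive entries, let χ = {(E_c ⊙ A ⊙ e^{iΦ})_{c∈I} : Φ ∈ ℝ^{n×n}} ⊆ H, let m ≥ 1, and let A_χ = {(x,x,…,x) ∈ H^m : x ∈ χ}. Then A_χ is prox-regular at every point (x̂, x̂, …, x̂) with x̂ ∈ χ. -/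
noncomputable section

/-! ### Auxiliary machinery -/

/-- The pixelwise "phase-correlation" functional. -/
def Sfun (n m : ℕ) (E : Fin 6 → Fin n × Fin n → ℝ) (A : Fin n × Fin n → ℝ)
    (u : Hm n m) (ξ : Fin n × Fin n) : ℂ :=
  (A ξ : ℂ) * ∑ d : Fin m, ∑ c : Fin 6, (E c ξ : ℂ) * u d (c, ξ)

lemma Sfun_continuous (n m : ℕ) (E : Fin 6 → Fin n × Fin n → ℝ) (A : Fin n × Fin n → ℝ)
    (ξ : Fin n × Fin n) : Continuous (fun u : Hm n m => Sfun n m E A u ξ) := by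
  apply continuous_const.mul
  apply continuous_finset_sum; intro d _
  apply continuous_finset_sum; intro c _
  exact continuous_const.mul (((continuous_apply ((c, ξ) : Fin 6 × Fin n × Fin n)).comp ((PiLp.continuous_ofLp 2 _).comp
    ((continuous_apply d).comp (PiLp.continuous_ofLp 2 _)))))

lemma normSq_y_term (E A φ : ℝ) :
    Complex.normSq ((E : ℂ) * (A : ℂ) * Complex.exp (Complex.I * (φ : ℂ))) = E ^ 2 * A ^ 2 := by
  have h1 : ‖Complex.exp (Complex.I * (φ : ℂ))‖ = 1 := by
    rw [Complex.norm_exp]; simp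
  rw [map_mul, map_mul, Complex.normSq_ofReal, Complex.normSq_ofReal, ← Complex.sq_norm, h1]
  ring

lemma conj_exp_I (φ : ℝ) :
    (starRingEnd ℂ) (Complex.exp (Complex.I * (φ : ℂ))) = Complex.exp (-(Complex.I * φ)) := by
  rw [← Complex.exp_conj]
  congr 1
  simp [map_mul, Complex.conj_I, Complex.conj_ofReal]

/-- The squared distance from `u` to the diagonal point determined by the phase `Φ`. -/
lemma dist_sq_diag (n m : ℕ) (E : Fin 6 → Fin n × Fin n → ℝ)
    (hE : ∀ ξ, ∑ c : Fin 6, (E c ξ) ^ 2 = 2)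
    (A : Fin n × Fin n → ℝ)
    (u : Hm n m) (Φ : Fin n × Fin n → ℝ) (y : H n)
    (hy : ∀ c ξ, y (c, ξ) = (E c ξ : ℂ) * (A ξ : ℂ) * Complex.exp (Complex.I * (Φ ξ : ℂ))) :
    dist u (WithLp.toLp 2 (fun _ => y) : Hm n m) ^ 2
      = (∑ d : Fin m, ∑ i : Fin 6 × Fin n × Fin n, Complex.normSq (u d i))
        + 2 * m * (∑ ξ : Fin n × Fin n, (A ξ) ^ 2)
        - 2 * ∑ ξ : Fin n × Fin n,
            (Complex.exp (-(Complex.I * (Φ ξ : ℂ))) * Sfun n m E A u ξ).re := by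
  have step1 : dist u (WithLp.toLp 2 (fun _ => y) : Hm n m) ^ 2
      = ∑ d : Fin m, ∑ i : Fin 6 × Fin n × Fin n, Complex.normSq (u d i - y i) := by
    rw [dist_eq_norm, PiLp.norm_sq_eq_of_L2]
    refine Finset.sum_congr rfl fun d _ => ?_
    rw [PiLp.sub_apply, PiLp.norm_sq_eq_of_L2]
    refine Finset.sum_congr rfl fun i _ => ?_
    rw [PiLp.sub_apply, Complex.sq_norm, PiLp.toLp_apply]
  have step2 : ∀ (d : Fin m) (i : Fin 6 × Fin n × Fin n), Complex.normSq (u d i - y i)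
      = Complex.normSq (u d i) + (E i.1 i.2) ^ 2 * (A i.2) ^ 2
        - 2 * ((E i.1 i.2) * (A i.2)
            * (Complex.exp (-(Complex.I * (Φ i.2 : ℂ))) * u d i).re) := by
    intro d i
    obtain ⟨c, ξ⟩ := i
    rw [Complex.normSq_sub, hy c ξ, normSq_y_term]
    congr 1
    have hconj : (starRingEnd ℂ) ((E c ξ : ℂ) * (A ξ : ℂ) * Complex.exp (Complex.I * (Φ ξ : ℂ)))
        = ((E c ξ * A ξ : ℝ) : ℂ) * Complex.exp (-(Complex.I * (Φ ξ : ℂ))) := by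
      rw [map_mul, map_mul, Complex.conj_ofReal, Complex.conj_ofReal, conj_exp_I]
      push_cast; ring
    rw [hconj]
    have hmul : u d (c, ξ) * (((E c ξ * A ξ : ℝ) : ℂ) * Complex.exp (-(Complex.I * (Φ ξ : ℂ))))
        = ((E c ξ * A ξ : ℝ) : ℂ) * (Complex.exp (-(Complex.I * (Φ ξ : ℂ))) * u d (c, ξ)) := by
      ring
    rw [hmul, Complex.re_ofReal_mul]
  have T2 : ∑ d : Fin m, ∑ i : Fin 6 × Fin n × Fin n, (E i.1 i.2) ^ 2 * (A i.2) ^ 2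
      = 2 * m * ∑ ξ : Fin n × Fin n, (A ξ) ^ 2 := by
    have hι : ∑ i : Fin 6 × Fin n × Fin n, (E i.1 i.2) ^ 2 * (A i.2) ^ 2
        = 2 * ∑ ξ : Fin n × Fin n, (A ξ) ^ 2 := by
      rw [Fintype.sum_prod_type, Finset.sum_comm, Finset.mul_sum]
      refine Finset.sum_congr rfl fun ξ _ => ?_
      show ∑ c : Fin 6, (E c ξ) ^ 2 * (A ξ) ^ 2 = 2 * (A ξ) ^ 2
      rw [← Finset.sum_mul, hE ξ]
    rw [Finset.sum_congr rfl fun d _ => hι, Finset.sum_const, Finset.card_univ,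
      Fintype.card_fin, nsmul_eq_mul]
    ring
  have T3 : ∑ d : Fin m, ∑ i : Fin 6 × Fin n × Fin n,
        (E i.1 i.2) * (A i.2) * (Complex.exp (-(Complex.I * (Φ i.2 : ℂ))) * u d i).re
      = ∑ ξ : Fin n × Fin n,
          (Complex.exp (-(Complex.I * (Φ ξ : ℂ))) * Sfun n m E A u ξ).re := by
    have hS : ∀ ξ, (Complex.exp (-(Complex.I * (Φ ξ : ℂ))) * Sfun n m E A u ξ).re
        = ∑ d : Fin m, ∑ c : Fin 6,
            (E c ξ) * (A ξ) * (Complex.exp (-(Complex.I * (Φ ξ : ℂ))) * u d (c, ξ)).re := by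
      intro ξ
      have hz : Complex.exp (-(Complex.I * (Φ ξ : ℂ))) * Sfun n m E A u ξ
          = ∑ d : Fin m, ∑ c : Fin 6,
              ((E c ξ * A ξ : ℝ) : ℂ) * (Complex.exp (-(Complex.I * (Φ ξ : ℂ))) * u d (c, ξ)) := by
        rw [Sfun, Finset.mul_sum, Finset.mul_sum]
        refine Finset.sum_congr rfl fun d _ => ?_
        rw [Finset.mul_sum, Finset.mul_sum]
        refine Finset.sum_congr rfl fun c _ => ?_
        push_cast; ring
      rw [hz, Complex.re_sum]
      refine Finset.sum_congr rfl fun d _ => ?_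
      rw [Complex.re_sum]
      refine Finset.sum_congr rfl fun c _ => ?_
      rw [Complex.re_ofReal_mul]
    calc ∑ d : Fin m, ∑ i : Fin 6 × Fin n × Fin n,
          (E i.1 i.2) * (A i.2) * (Complex.exp (-(Complex.I * (Φ i.2 : ℂ))) * u d i).re
        = ∑ d : Fin m, ∑ ξ : Fin n × Fin n, ∑ c : Fin 6,
            (E c ξ) * (A ξ) * (Complex.exp (-(Complex.I * (Φ ξ : ℂ))) * u d (c, ξ)).re := by
          refine Finset.sum_congr rfl fun d _ => ?_
          rw [Fintype.sum_prod_type, Finset.sum_comm]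
      _ = ∑ ξ : Fin n × Fin n, ∑ d : Fin m, ∑ c : Fin 6,
            (E c ξ) * (A ξ) * (Complex.exp (-(Complex.I * (Φ ξ : ℂ))) * u d (c, ξ)).re :=
          Finset.sum_comm
      _ = ∑ ξ : Fin n × Fin n,
            (Complex.exp (-(Complex.I * (Φ ξ : ℂ))) * Sfun n m E A u ξ).re := by
          exact Finset.sum_congr rfl fun ξ _ => (hS ξ).symm
  rw [step1, Finset.sum_congr rfl fun d _ => Finset.sum_congr rfl fun i _ => step2 d i]
  simp only [Finset.sum_sub_distrib, Finset.sum_add_distrib, ← Finset.mul_sum]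
  rw [T2, T3]

lemma re_mul_exp_le (φ : ℝ) (S : ℂ) :
    (Complex.exp (-(Complex.I * (φ : ℂ))) * S).re ≤ ‖S‖ := by
  refine (Complex.re_le_norm _).trans ?_
  rw [norm_mul, Complex.norm_exp]
  simp

lemma re_eq_abs_imp {z : ℂ} (h : z.re = ‖z‖) : z = (‖z‖ : ℂ) := by
  have h2 : ‖z‖ ^ 2 = z.re ^ 2 + z.im ^ 2 := by
    rw [Complex.sq_norm, Complex.normSq_apply]; ring
  have him : z.im = 0 := by nlinarith [norm_nonneg z]
  refine Complex.ext ?_ ?_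
  · rw [Complex.ofReal_re, ← h]
  · rw [Complex.ofReal_im, him]

lemma re_at_arg (S : ℂ) :
    (Complex.exp (-(Complex.I * (S.arg : ℂ))) * S).re = ‖S‖ := by
  have h0 : ((‖S‖ : ℝ) : ℂ) * Complex.exp ((S.arg : ℂ) * Complex.I) = S :=
    Complex.norm_mul_exp_arg_mul_I S
  have key : Complex.exp (-(Complex.I * (S.arg : ℂ)))
      * (((‖S‖ : ℝ) : ℂ) * Complex.exp ((S.arg : ℂ) * Complex.I))
      = ((‖S‖ : ℝ) : ℂ) := by
    rw [mul_comm (((‖S‖ : ℝ) : ℂ)) _, ← mul_assoc, ← Complex.exp_add,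
      show -(Complex.I * (S.arg : ℂ)) + (S.arg : ℂ) * Complex.I = 0 by ring,
      Complex.exp_zero, one_mul]
  nth_rewrite 2 [← h0]
  rw [key, Complex.ofReal_re]

lemma phase_eq (φ : ℝ) {S : ℂ} (hS : S ≠ 0)
    (h : (Complex.exp (-(Complex.I * (φ : ℂ))) * S).re = ‖S‖) :
    Complex.exp (Complex.I * (φ : ℂ)) = Complex.exp (Complex.I * (S.arg : ℂ)) := by
  set z := Complex.exp (-(Complex.I * (φ : ℂ))) * S with hz
  have habs : ‖z‖ = ‖S‖ := by
    rw [hz, norm_mul, Complex.norm_exp]; simp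
  have hzr : z = (‖S‖ : ℂ) := by
    rw [← habs]
    exact re_eq_abs_imp (by rw [habs]; exact h)
  have hh : Complex.exp (Complex.I * (φ : ℂ)) * z = S := by
    rw [hz, ← mul_assoc, ← Complex.exp_add]
    rw [show Complex.I * (φ : ℂ) + -(Complex.I * (φ : ℂ)) = 0 by ring, Complex.exp_zero, one_mul]
  rw [hzr] at hh
  have harg : Complex.exp (Complex.I * (S.arg : ℂ)) * ((‖S‖ : ℝ) : ℂ) = S := by
    rw [show Complex.I * (S.arg : ℂ) = (S.arg : ℂ) * Complex.I by ring,
      mul_comm (Complex.exp ((S.arg : ℂ) * Complex.I)) _]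
    exact Complex.norm_mul_exp_arg_mul_I S
  have habs0 : ((‖S‖ : ℝ) : ℂ) ≠ 0 := by
    simpa using (norm_ne_zero_iff.2 hS)
  exact mul_right_cancel₀ habs0 (hh.trans harg.symm)

lemma Sfun_diag (n m : ℕ) (E : Fin 6 → Fin n × Fin n → ℝ)
    (hE : ∀ ξ, ∑ c : Fin 6, (E c ξ) ^ 2 = 2)
    (A : Fin n × Fin n → ℝ) (xhat : H n) (Φh : Fin n × Fin n → ℝ)
    (hxh : ∀ c ξ, xhat (c, ξ) = (E c ξ : ℂ) * (A ξ : ℂ) * Complex.exp (Complex.I * (Φh ξ : ℂ)))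
    (ξ : Fin n × Fin n) :
    Sfun n m E A (WithLp.toLp 2 (fun _ => xhat)) ξ
      = 2 * m * ((A ξ : ℂ)) ^ 2 * Complex.exp (Complex.I * (Φh ξ : ℂ)) := by
  rw [Sfun]
  simp only [PiLp.toLp_apply]
  have hc : ∑ c : Fin 6, (E c ξ : ℂ) * xhat (c, ξ)
      = 2 * (A ξ : ℂ) * Complex.exp (Complex.I * (Φh ξ : ℂ)) := by
    calc ∑ c : Fin 6, (E c ξ : ℂ) * xhat (c, ξ)
        = ∑ c : Fin 6, ((E c ξ : ℂ)) ^ 2 * ((A ξ : ℂ) * Complex.exp (Complex.I * (Φh ξ : ℂ))) := by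
          refine Finset.sum_congr rfl fun c _ => ?_
          rw [hxh c ξ]; ring
      _ = (∑ c : Fin 6, ((E c ξ : ℂ)) ^ 2) * ((A ξ : ℂ) * Complex.exp (Complex.I * (Φh ξ : ℂ))) := by
          rw [Finset.sum_mul]
      _ = 2 * (A ξ : ℂ) * Complex.exp (Complex.I * (Φh ξ : ℂ)) := by
          have hcast : (∑ c : Fin 6, ((E c ξ : ℂ)) ^ 2) = ((∑ c : Fin 6, (E c ξ) ^ 2 : ℝ) : ℂ) := by
            push_cast; rfl
          rw [hcast, hE ξ]; push_cast; ring
  rw [Finset.sum_congr rfl fun d (_ : d ∈ Finset.univ) => hc, Finset.sum_const,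
    Finset.card_univ, Fintype.card_fin, nsmul_eq_mul]
  ring

/-- If the amplitude `A` is strictly positive everywhere, the diagonal set
`A_χ = {(x,…,x) ∈ H^m : x ∈ χ}` is prox-regular at every point `(xhat,…,xhat)` with
`xhat ∈ χ`. -/
theorem proxRegularAt_A_chi (n m : ℕ) (hn : 1 ≤ n) (hm : 1 ≤ m)
    (E : Fin 6 → Fin n × Fin n → ℝ)
    (hE : ∀ ξ, ∑ c : Fin 6, (E c ξ) ^ 2 = 2)
    (A : Fin n × Fin n → ℝ) (hA : ∀ ξ, 0 < A ξ)
    (χ : Set (H n))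
    (hχ : χ = {y : H n | ∃ Φ : Fin n × Fin n → ℝ,
      ∀ c ξ, y (c, ξ) = (E c ξ : ℂ) * (A ξ : ℂ) * Complex.exp (Complex.I * (Φ ξ : ℂ))})
    (Aχ : Set (Hm n m))
    (hAχ : Aχ = {u : Hm n m | ∃ x ∈ χ, ∀ d, u d = x}) :
    ∀ xhat ∈ χ, ProxRegularAt Aχ (WithLp.toLp 2 (fun _ => xhat) : Hm n m) := by
  intro xhat hx
  have hxχ := hx
  rw [hχ] at hxχ
  obtain ⟨Φh, hΦh⟩ := hxχ
  refine ⟨{u : Hm n m | ∀ ξ, Sfun n m E A u ξ ≠ 0}, ?_, ?_⟩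
  · refine IsOpen.mem_nhds ?_ ?_
    · have hset : {u : Hm n m | ∀ ξ, Sfun n m E A u ξ ≠ 0}
          = ⋂ ξ, {u : Hm n m | Sfun n m E A u ξ ≠ 0} := by
        ext u; simp
      rw [hset]
      exact isOpen_iInter_of_finite fun ξ =>
        isOpen_ne_fun (Sfun_continuous n m E A ξ) continuous_const
    · intro ξ
      rw [Sfun_diag n m E hE A xhat Φh hΦh ξ]
      have hm0 : (m : ℂ) ≠ 0 := Nat.cast_ne_zero.2 (by omega)
      have hA0 : ((A ξ : ℝ) : ℂ) ≠ 0 := Complex.ofReal_ne_zero.2 (hA ξ).ne'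
      exact mul_ne_zero (mul_ne_zero (mul_ne_zero two_ne_zero hm0) (pow_ne_zero 2 hA0))
        (Complex.exp_ne_zero _)
  · intro u hu
    simp only [Set.mem_setOf_eq] at hu
    set Φs : Fin n × Fin n → ℝ := fun ξ => (Sfun n m E A u ξ).arg with hΦs
    set ys : H n :=
      (WithLp.toLp 2 (fun i => (E i.1 i.2 : ℂ) * (A i.2 : ℂ) * Complex.exp (Complex.I * (Φs i.2 : ℂ))) :
        EuclideanSpace ℂ (Fin 6 × Fin n × Fin n)) with hysdef
    have hysv : ∀ c ξ, ys (c, ξ)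
        = (E c ξ : ℂ) * (A ξ : ℂ) * Complex.exp (Complex.I * (Φs ξ : ℂ)) := fun c ξ => rfl
    have hysχ : ys ∈ χ := by rw [hχ]; exact ⟨Φs, hysv⟩
    have hwsA : (WithLp.toLp 2 (fun _ => ys) : Hm n m) ∈ Aχ := by
      rw [hAχ]; exact ⟨ys, hysχ, fun d => rfl⟩
    have hws2 : dist u (WithLp.toLp 2 (fun _ => ys) : Hm n m) ^ 2
        = (∑ d : Fin m, ∑ i : Fin 6 × Fin n × Fin n, Complex.normSq (u d i))
          + 2 * m * (∑ ξ : Fin n × Fin n, (A ξ) ^ 2)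
          - 2 * ∑ ξ : Fin n × Fin n, ‖Sfun n m E A u ξ‖ := by
      rw [dist_sq_diag n m E hE A u Φs ys hysv]
      congr 1
      rw [Finset.mul_sum, Finset.mul_sum]
      exact Finset.sum_congr rfl fun ξ _ => by rw [re_at_arg]
    have hle : ∀ w ∈ Aχ, dist u (WithLp.toLp 2 (fun _ => ys) : Hm n m) ≤ dist u w := by
      intro w hw
      rw [hAχ] at hw
      obtain ⟨y, hyχ, hwd⟩ := hw
      rw [hχ] at hyχ
      obtain ⟨Φ, hy⟩ := hyχ
      have hweq : w = (WithLp.toLp 2 (fun _ => y) : Hm n m) := PiLp.ext hwd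
      have hsum : ∑ ξ : Fin n × Fin n,
            (Complex.exp (-(Complex.I * (Φ ξ : ℂ))) * Sfun n m E A u ξ).re
          ≤ ∑ ξ : Fin n × Fin n, ‖Sfun n m E A u ξ‖ :=
        Finset.sum_le_sum fun ξ _ => re_mul_exp_le (Φ ξ) (Sfun n m E A u ξ)
      have hsq : dist u (WithLp.toLp 2 (fun _ => ys) : Hm n m) ^ 2 ≤ dist u w ^ 2 := by
        rw [hweq, dist_sq_diag n m E hE A u Φ y hy, hws2]
        linarith
      exact (pow_le_pow_iff_left₀ dist_nonneg dist_nonneg (by norm_num)).1 hsq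
    have hinf : Metric.infDist u Aχ = dist u (WithLp.toLp 2 (fun _ => ys) : Hm n m) := by
      refine le_antisymm (Metric.infDist_le_dist_of_mem hwsA) ?_
      rw [Metric.infDist_eq_iInf]
      haveI : Nonempty Aχ := ⟨⟨(WithLp.toLp 2 (fun _ => ys) : Hm n m), hwsA⟩⟩
      exact le_ciInf fun w => hle w w.2
    refine ⟨(WithLp.toLp 2 (fun _ => ys) : Hm n m), ⟨hwsA, hinf.symm⟩, ?_⟩
    rintro w ⟨hwA, hwd⟩
    have hwA' := hwA
    rw [hAχ] at hwA'
    obtain ⟨y, hyχ, hwdg⟩ := hwA'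
    rw [hχ] at hyχ
    obtain ⟨Φ, hy⟩ := hyχ
    have hweq : w = (WithLp.toLp 2 (fun _ => y) : Hm n m) := PiLp.ext hwdg
    have hde : dist u w = dist u (WithLp.toLp 2 (fun _ => ys) : Hm n m) := by rw [hwd, hinf]
    have hsq : dist u (WithLp.toLp 2 (fun _ => y) : Hm n m) ^ 2 = dist u (WithLp.toLp 2 (fun _ => ys) : Hm n m) ^ 2 := by
      rw [← hweq, hde]
    rw [dist_sq_diag n m E hE A u Φ y hy, hws2] at hsq
    have hsum : ∑ ξ : Fin n × Fin n,
          (Complex.exp (-(Complex.I * (Φ ξ : ℂ))) * Sfun n m E A u ξ).re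
        = ∑ ξ : Fin n × Fin n, ‖Sfun n m E A u ξ‖ := by
      linarith
    have hptw : ∀ ξ ∈ (Finset.univ : Finset (Fin n × Fin n)),
        (Complex.exp (-(Complex.I * (Φ ξ : ℂ))) * Sfun n m E A u ξ).re
          = ‖Sfun n m E A u ξ‖ :=
      (Finset.sum_eq_sum_iff_of_le fun ξ _ => re_mul_exp_le (Φ ξ) (Sfun n m E A u ξ)).1 hsum
    have hyeq : y = ys := by
      ext i
      obtain ⟨c, ξ⟩ := i
      rw [hy c ξ, hysv c ξ]
      rw [phase_eq (Φ ξ) (hu ξ) (hptw ξ (Finset.mem_univ ξ))]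
    rw [hweq, hyeq]
end
end

section
/- For d = 1, …, m let M_d : H → H be unitary operators, let r_d ∈ ℝ^{n×n} be entrywise nonnegative, let S_{r_d} = {y ∈ H : ∑_{c∈I} |y_c[ξ]|² = r_d[ξ] for all ξ}, let Ω_d = M_d⁻¹(S_{r_d}), and let B = Ω_1 × Ω_2 × ⋯ × Ω_m ⊆ H^m. Then B is prox-regular at every point (x̂_1, x̂_2, …, x̂_m) ∈ B such that for every d = 1, …, m and every pixel ξ, (M_d x̂_d)[ξ] ≠ 0. -/
noncomputable section

lemma uniqueProj_of_min {E : Type*} [NormedAddCommGroup E] {Ω : Set E} {x w : E} (hw : w ∈ Ω)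
    (hmin : ∀ z ∈ Ω, dist x w ≤ dist x z)
    (huniq : ∀ z ∈ Ω, dist x z = dist x w → z = w) :
    ∃! w', w' ∈ proj Ω x := by
  have hinf : Metric.infDist x Ω = dist x w :=
    le_antisymm (Metric.infDist_le_dist_of_mem hw) (by
      by_contra h
      push_neg at h
      obtain ⟨z, hz, hlt⟩ := (Metric.infDist_lt_iff ⟨w, hw⟩).mp h
      exact absurd (hmin z hz) (not_le.mpr hlt))
  refine ⟨w, ⟨hw, hinf.symm⟩, ?_⟩
  rintro z ⟨hzΩ, hzd⟩
  exact huniq z hzΩ (by rw [hzd, hinf])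

lemma sphere_min {F : Type*} [NormedAddCommGroup F] [InnerProductSpace ℂ F]
    {v : F} (hv : v ≠ 0) {ρ : ℝ} (hρ : 0 ≤ ρ) :
    ‖(((ρ / ‖v‖ : ℝ) : ℂ)) • v‖ = ρ ∧
    ‖v - (((ρ / ‖v‖ : ℝ) : ℂ)) • v‖ ^ 2 = (‖v‖ - ρ) ^ 2 ∧
    ∀ u : F, ‖u‖ = ρ → (‖v‖ - ρ) ^ 2 ≤ ‖v - u‖ ^ 2 ∧
      (‖v - u‖ ^ 2 = (‖v‖ - ρ) ^ 2 → u = (((ρ / ‖v‖ : ℝ) : ℂ)) • v) := by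
  have hvn : 0 < ‖v‖ := norm_pos_iff.mpr hv
  have hwn : ‖(((ρ / ‖v‖ : ℝ) : ℂ)) • v‖ = ρ := by
    rw [norm_smul, Complex.norm_real, Real.norm_eq_abs,
      abs_of_nonneg (div_nonneg hρ hvn.le), div_mul_cancel₀ _ hvn.ne']
  have reMul : ∀ (t : ℝ) (z : ℂ), RCLike.re ((t : ℂ) * z) = t * RCLike.re z := by
    intro t z; simp [Complex.mul_re]
  have key : ∀ a b : F, ‖a - b‖ ^ 2
      = ‖a‖ ^ 2 - 2 * RCLike.re (inner ℂ a b : ℂ) + ‖b‖ ^ 2 := fun a b => norm_sub_sq a b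
  have hrew : RCLike.re (inner ℂ v ((((ρ / ‖v‖ : ℝ) : ℂ)) • v) : ℂ) = ρ * ‖v‖ := by
    rw [inner_smul_right, reMul, inner_self_eq_norm_sq]
    field_simp
  refine ⟨hwn, by rw [key, hrew, hwn]; ring, fun u hu => ?_⟩
  have hle := re_inner_le_norm (𝕜 := ℂ) v u
  rw [hu] at hle
  constructor
  · rw [key, hu]; nlinarith
  · intro heq
    rw [key, hu] at heq
    have hre : RCLike.re (inner ℂ v u : ℂ) = ‖v‖ * ρ := by nlinarith
    have h2 : ‖u - (((ρ / ‖v‖ : ℝ) : ℂ)) • v‖ ^ 2 = 0 := by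
      rw [key, hwn, hu, inner_smul_right, reMul, inner_re_symm, hre]
      field_simp
      ring
    have := pow_eq_zero_iff (n := 2) (by norm_num) |>.mp h2
    rw [norm_eq_zero, sub_eq_zero] at this
    exact this

def blk {n : ℕ} (y : EuclideanSpace ℂ (Fin 6 × Fin n × Fin n)) (ξ : Fin n × Fin n) :
    EuclideanSpace ℂ (Fin 6) := WithLp.toLp 2 (fun c => y (c, ξ))

lemma dist_sq_blk {n : ℕ} (y z : EuclideanSpace ℂ (Fin 6 × Fin n × Fin n)) :
    dist y z ^ 2 = ∑ ξ : Fin n × Fin n, ‖blk y ξ - blk z ξ‖ ^ 2 := by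
  rw [EuclideanSpace.dist_eq, Real.sq_sqrt (Finset.sum_nonneg fun i _ => sq_nonneg _)]
  rw [Fintype.sum_prod_type, Finset.sum_comm]
  refine Finset.sum_congr rfl fun ξ _ => ?_
  rw [PiLp.norm_sq_eq_of_L2]
  refine Finset.sum_congr rfl fun c _ => ?_
  simp [blk, dist_eq_norm, PiLp.sub_apply]

lemma S_min {n : ℕ} (r : Fin n × Fin n → ℝ) (hr : ∀ ξ, 0 ≤ r ξ)
    (v : EuclideanSpace ℂ (Fin 6 × Fin n × Fin n)) (hv : ∀ ξ, blk v ξ ≠ 0) :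
    ∃ w, (∀ ξ, ∑ c : Fin 6, ‖w (c, ξ)‖ ^ 2 = r ξ) ∧
      ∀ z, (∀ ξ, ∑ c : Fin 6, ‖z (c, ξ)‖ ^ 2 = r ξ) →
        dist v w ≤ dist v z ∧ (dist v z = dist v w → z = w) := by
  have hmem : ∀ (y : EuclideanSpace ℂ (Fin 6 × Fin n × Fin n)) (ξ : Fin n × Fin n),
      (∑ c : Fin 6, ‖y (c, ξ)‖ ^ 2) = ‖blk y ξ‖ ^ 2 := fun y ξ =>
    (PiLp.norm_sq_eq_of_L2 _ (blk y ξ)).symm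
  set w : EuclideanSpace ℂ (Fin 6 × Fin n × Fin n) :=
    WithLp.toLp 2 fun p => ((Real.sqrt (r p.2) / ‖blk v p.2‖ : ℝ) : ℂ) • v p with hwdef
  have hblkw : ∀ ξ, blk w ξ = ((Real.sqrt (r ξ) / ‖blk v ξ‖ : ℝ) : ℂ) • blk v ξ := fun ξ => rfl
  have Sξ := fun ξ : Fin n × Fin n => sphere_min (hv ξ) (Real.sqrt_nonneg (r ξ))
  have hwS : ∀ ξ, ∑ c : Fin 6, ‖w (c, ξ)‖ ^ 2 = r ξ := by
    intro ξ
    rw [hmem w ξ, hblkw ξ, (Sξ ξ).1, Real.sq_sqrt (hr ξ)]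
  refine ⟨w, hwS, fun z hz => ?_⟩
  have hznorm : ∀ ξ, ‖blk z ξ‖ = Real.sqrt (r ξ) := by
    intro ξ
    rw [← hz ξ, hmem z ξ, Real.sqrt_sq (norm_nonneg _)]
  have hterm : ∀ ξ : Fin n × Fin n,
      ‖blk v ξ - blk w ξ‖ ^ 2 ≤ ‖blk v ξ - blk z ξ‖ ^ 2 := by
    intro ξ
    rw [hblkw ξ, (Sξ ξ).2.1]
    exact ((Sξ ξ).2.2 (blk z ξ) (hznorm ξ)).1
  have hsq : dist v w ^ 2 ≤ dist v z ^ 2 := by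
    rw [dist_sq_blk, dist_sq_blk]
    exact Finset.sum_le_sum fun ξ _ => hterm ξ
  have hle : dist v w ≤ dist v z := by
    have := Real.sqrt_le_sqrt hsq
    rwa [Real.sqrt_sq dist_nonneg, Real.sqrt_sq dist_nonneg] at this
  refine ⟨hle, fun heq => ?_⟩
  have hsum : ∑ ξ : Fin n × Fin n, ‖blk v ξ - blk w ξ‖ ^ 2
      = ∑ ξ : Fin n × Fin n, ‖blk v ξ - blk z ξ‖ ^ 2 := by
    rw [← dist_sq_blk, ← dist_sq_blk, heq]
  have hall := (Finset.sum_eq_sum_iff_of_le fun ξ _ => hterm ξ).mp hsum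
  have hblk : ∀ ξ : Fin n × Fin n, blk z ξ = blk w ξ := by
    intro ξ
    have h1 : ‖blk v ξ - blk z ξ‖ ^ 2 = (‖blk v ξ‖ - Real.sqrt (r ξ)) ^ 2 := by
      rw [← hall ξ (Finset.mem_univ ξ), hblkw ξ, (Sξ ξ).2.1]
    rw [hblkw ξ]
    exact ((Sξ ξ).2.2 (blk z ξ) (hznorm ξ)).2 h1
  refine PiLp.ext fun p => ?_
  exact congrArg (fun b => b p.1) (hblk p.2)

/-- The product set `B = Ω₁ × ⋯ × Ω_m`, where `Ω_d = M_d⁻¹(S_{r_d})`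
for unitary `M_d` and entrywise nonnegative `r_d`, is prox-regular at every point
`(xhat₁,…,xhat_m) ∈ B` such that `(M_d xhat_d)[ξ] ≠ 0` for all `d` and all pixels `ξ`. -/
theorem proxRegularAt_B (n m : ℕ) (hn : 1 ≤ n) (hm : 1 ≤ m)
    (M : Fin m → (H n ≃ₗᵢ[ℂ] H n))
    (r : Fin m → Fin n × Fin n → ℝ) (hr : ∀ d ξ, 0 ≤ r d ξ)
    (Sr : Fin m → Set (H n))
    (hSr : ∀ d, Sr d = {y : H n | ∀ ξ, ∑ c : Fin 6, ‖y (c, ξ)‖ ^ 2 = r d ξ})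
    (Ω : Fin m → Set (H n)) (hΩ : ∀ d, Ω d = (M d) ⁻¹' (Sr d))
    (B : Set (Hm n m)) (hB : B = {u : Hm n m | ∀ d, u d ∈ Ω d})
    (xhat : Hm n m) (hxhat : xhat ∈ B)
    (hnz : ∀ d ξ, ∃ c, (M d (xhat d)) (c, ξ) ≠ 0) :
    ProxRegularAt B xhat := by
  classical
  set U : Set (Hm n m) := {x | ∀ d ξ, blk (M d (x d)) ξ ≠ 0} with hUdef
  -- continuity of the block evaluation maps
  have hcont : ∀ (d : Fin m) (ξ : Fin n × Fin n),
      Continuous fun x : Hm n m => blk (M d (x d)) ξ := by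
    intro d ξ
    let L : Hm n m →ₗ[ℂ] EuclideanSpace ℂ (Fin 6) :=
      { toFun := fun x => blk (M d (x d)) ξ
        map_add' := by
          intro x y
          refine PiLp.ext fun c => ?_
          show M d (x d + y d) (c, ξ) = M d (x d) (c, ξ) + M d (y d) (c, ξ)
          rw [map_add]; rfl
        map_smul' := by
          intro a x
          refine PiLp.ext fun c => ?_
          show M d (a • x d) (c, ξ) = a • M d (x d) (c, ξ)
          rw [map_smul]; rfl }
    exact (PiLp.continuous_toLp 2 _).comp (continuous_pi fun c => ((PiLp.continuous_apply 2 _ (c, ξ)).comp (M d).continuous).comp (PiLp.continuous_apply 2 _ d))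
  have hUopen : IsOpen U := by
    have hrepr : U = ⋂ d, ⋂ ξ, (fun x : Hm n m => blk (M d (x d)) ξ) ⁻¹' {0}ᶜ := by
      ext x
      simp [hUdef]
    rw [hrepr]
    exact isOpen_iInter_of_finite fun d =>
      isOpen_iInter_of_finite fun ξ => isOpen_compl_singleton.preimage (hcont d ξ)
  have hxU : xhat ∈ U := by
    intro d ξ h0
    obtain ⟨c, hc⟩ := hnz d ξ
    exact hc (congrArg (fun b => b c) h0)
  refine ⟨U, hUopen.mem_nhds hxU, fun x hx => ?_⟩
  -- componentwise unique nearest points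
  have hex : ∀ d : Fin m, ∃ w0, w0 ∈ Ω d ∧ ∀ z ∈ Ω d,
      dist (x d) w0 ≤ dist (x d) z ∧ (dist (x d) z = dist (x d) w0 → z = w0) := by
    intro d
    obtain ⟨wS, hwS, hwmin⟩ := S_min (r d) (hr d) (M d (x d)) (hx d)
    refine ⟨(M d).symm wS, ?_, ?_⟩
    · rw [hΩ d, Set.mem_preimage, hSr d]
      show ∀ ξ, ∑ c : Fin 6, ‖(M d ((M d).symm wS)) (c, ξ)‖ ^ 2 = r d ξ
      rw [(M d).apply_symm_apply]
      exact hwS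
    · intro z hz
      have hzS : ∀ ξ, ∑ c : Fin 6, ‖(M d z) (c, ξ)‖ ^ 2 = r d ξ := by
        rw [hΩ d, Set.mem_preimage, hSr d] at hz
        exact hz
      have h1 : dist (x d) ((M d).symm wS) = dist (M d (x d)) wS := by
        rw [← (M d).dist_map (x d) ((M d).symm wS), (M d).apply_symm_apply]
      have h2 : dist (x d) z = dist (M d (x d)) (M d z) := ((M d).dist_map _ _).symm
      obtain ⟨hminz, huniz⟩ := hwmin (M d z) hzS
      refine ⟨by rw [h1, h2]; exact hminz, fun heq => ?_⟩
      have : M d z = wS := huniz (by rw [← h2, ← h1, heq])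
      rw [← this, (M d).symm_apply_apply]
  choose w0 hw0mem hw0min using hex
  set wstar : Hm n m := WithLp.toLp 2 fun d => w0 d with hwstar
  have hwB : wstar ∈ B := by rw [hB]; exact fun d => hw0mem d
  have dsq : ∀ a b : Hm n m, dist a b ^ 2 = ∑ d, dist (a d) (b d) ^ 2 := by
    intro a b
    rw [PiLp.dist_eq_of_L2, Real.sq_sqrt (Finset.sum_nonneg fun _ _ => sq_nonneg _)]
  have hminB : ∀ z ∈ B, dist x wstar ≤ dist x z := by
    intro z hz
    rw [hB] at hz
    have hsq : dist x wstar ^ 2 ≤ dist x z ^ 2 := by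
      rw [dsq, dsq]
      exact Finset.sum_le_sum fun d _ =>
        pow_le_pow_left₀ dist_nonneg ((hw0min d (z d) (hz d)).1) 2
    have := Real.sqrt_le_sqrt hsq
    rwa [Real.sqrt_sq dist_nonneg, Real.sqrt_sq dist_nonneg] at this
  have huniqB : ∀ z ∈ B, dist x z = dist x wstar → z = wstar := by
    intro z hz heq
    rw [hB] at hz
    have hterm : ∀ d : Fin m, dist (x d) (wstar d) ^ 2 ≤ dist (x d) (z d) ^ 2 := fun d =>
      pow_le_pow_left₀ dist_nonneg ((hw0min d (z d) (hz d)).1) 2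
    have hsum : ∑ d, dist (x d) (wstar d) ^ 2 = ∑ d, dist (x d) (z d) ^ 2 := by
      rw [← dsq, ← dsq, heq]
    have hall := (Finset.sum_eq_sum_iff_of_le fun d _ => hterm d).mp hsum
    refine PiLp.ext fun d => ?_
    have hd : dist (x d) (z d) = dist (x d) (wstar d) := by
      have h2 := (hall d (Finset.mem_univ d)).symm
      have := congrArg Real.sqrt h2
      rwa [Real.sqrt_sq dist_nonneg, Real.sqrt_sq dist_nonneg] at this
    exact (hw0min d (z d) (hz d)).2 hd
  exact uniqueProj_of_min hwB hminB huniqB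
end
end

section
/- Let H be a finite-dimensional real or complex Hilbert space and let Ω ⊆ H be a nonempty closed set that is prox-regular at x̂ ∈ Ω. Then for every ε > 0 there exists a neighborhood U of x̂ on which the projector P_Ω is almost averaged with violation ε and averaging constant 1/2; that is, for all y, z ∈ U, all y⁺ ∈ P_Ω(y) and all z⁺ ∈ P_Ω(z): ‖z⁺ − y⁺‖² ≤ (1+ε)‖z − y‖² − ‖(z⁺ − z) − (y⁺ − y)‖². -/
noncomputable section

open Metric Filter Topology

section RealAux

variable {F : Type*} [NormedAddCommGroup F] [InnerProductSpace ℝ F] {Ω : Set F}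

local notation "⟪" x ", " y "⟫" => @inner ℝ F _ x y

lemma proj_nonempty' [ProperSpace F] (hc : IsClosed Ω) (hne : Ω.Nonempty) (x : F) :
    ∃ p, p ∈ proj Ω x := by
  obtain ⟨y, hy, hd⟩ := hc.exists_infDist_eq_dist hne x
  exact ⟨y, hy, hd.symm⟩

lemma norm_le_of_mem_proj' {p x : F} (hp : p ∈ proj Ω x) {w : F} (hw : w ∈ Ω) :
    ‖x - p‖ ≤ ‖x - w‖ := by
  have h1 : dist x p ≤ dist x w := hp.2 ▸ Metric.infDist_le_dist_of_mem hw
  simpa [dist_eq_norm] using h1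

lemma basic_prox' {p x : F} (hp : p ∈ proj Ω x) {w : F} (hw : w ∈ Ω) :
    ⟪x - p, w - p⟫ ≤ ‖w - p‖ ^ 2 / 2 := by
  have h := norm_le_of_mem_proj' hp hw
  have h2 : ‖x - p‖ ^ 2 ≤ ‖x - w‖ ^ 2 := pow_le_pow_left₀ (norm_nonneg _) h 2
  have h3 : x - w = (x - p) - (w - p) := by abel
  rw [h3, norm_sub_sq_real (x - p) (w - p)] at h2
  linarith

lemma segment_proj' [ProperSpace F] (hc : IsClosed Ω) (hne : Ω.Nonempty) {p x : F}
    (hp : p ∈ proj Ω x) {t : ℝ} (h0 : 0 ≤ t) (h1 : t ≤ 1) :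
    p ∈ proj Ω (p + t • (x - p)) := by
  set m := p + t • (x - p) with hm
  have hmp : ‖m - p‖ = t * ‖x - p‖ := by
    have : m - p = t • (x - p) := by rw [hm]; abel
    rw [this, norm_smul, Real.norm_eq_abs, abs_of_nonneg h0]
  have hxm : ‖x - m‖ = (1 - t) * ‖x - p‖ := by
    have : x - m = (1 - t) • (x - p) := by rw [hm, sub_smul, one_smul]; abel
    rw [this, norm_smul, Real.norm_eq_abs, abs_of_nonneg (by linarith)]
  have key : ∀ w ∈ Ω, ‖m - p‖ ≤ ‖m - w‖ := by
    intro w hw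
    have h2 := norm_le_of_mem_proj' hp hw
    have tri : ‖x - w‖ ≤ ‖x - m‖ + ‖m - w‖ := by
      have : x - w = (x - m) + (m - w) := by abel
      rw [this]; exact norm_add_le _ _
    linarith [hmp, hxm]
  obtain ⟨q, hq⟩ := proj_nonempty' hc hne m
  refine ⟨hp.1, le_antisymm ?_ (Metric.infDist_le_dist_of_mem hp.1)⟩
  have : dist m p ≤ dist m q := by
    rw [dist_eq_norm, dist_eq_norm]; exact key q hq.1
  exact this.trans (le_of_eq hq.2)

lemma directional' [ProperSpace F] (hc : IsClosed Ω) (hne : Ω.Nonempty)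
    {z xb pb v : F} {ρ t₀ : ℝ} (ht₀ : 0 < t₀)
    (hpb : pb ∈ proj Ω xb)
    (huniq : ∀ q ∈ proj Ω xb, q = pb)
    (hmax : ∀ x ∈ Metric.closedBall z ρ, Metric.infDist x Ω ≤ Metric.infDist xb Ω)
    (hv : ∀ s : ℝ, 0 < s → s ≤ t₀ → xb + s • v ∈ Metric.closedBall z ρ) :
    ⟪v, xb - pb⟫ ≤ 0 := by
  set d := Metric.infDist xb Ω with hd
  set t : ℕ → ℝ := fun n => t₀ * (1 / (n + 1)) with ht
  have htpos : ∀ n, 0 < t n := fun n => by positivity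
  have htle : ∀ n, t n ≤ t₀ := by
    intro n
    rw [ht]
    have h1 : 1 / ((n : ℝ) + 1) ≤ 1 := by
      rw [div_le_one (by positivity)]; linarith [Nat.cast_nonneg (α := ℝ) n]
    nlinarith
  have ht0 : Filter.Tendsto t Filter.atTop (nhds 0) := by
    have := tendsto_one_div_add_atTop_nhds_zero_nat.const_mul t₀
    simpa [ht] using this
  choose q hq using fun n => proj_nonempty' hc hne (xb + t n • v)
  have hsmall : ∀ n, ‖xb + t n • v - q n‖ ≤ d := by
    intro n
    have h1 : dist (xb + t n • v) (q n) = Metric.infDist (xb + t n • v) Ω := (hq n).2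
    rw [← dist_eq_norm, h1]
    exact hmax _ (hv _ (htpos n) (htle n))
  have hkey : ∀ n, ⟪v, xb - q n⟫ ≤ 0 := by
    intro n
    have h2 : d ≤ ‖xb - q n‖ := by
      have h := Metric.infDist_le_dist_of_mem (s := Ω) (x := xb) (hq n).1
      rw [dist_eq_norm] at h; exact h
    have h3 : ‖(xb - q n) + t n • v‖ ^ 2 ≤ ‖xb - q n‖ ^ 2 := by
      have heq : xb + t n • v - q n = (xb - q n) + t n • v := by abel
      have := (hsmall n).trans h2
      rw [heq] at this
      exact pow_le_pow_left₀ (norm_nonneg _) this 2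
    rw [norm_add_sq_real] at h3
    have h4 : ⟪xb - q n, t n • v⟫ ≤ 0 := by nlinarith [sq_nonneg ‖t n • v‖]
    rw [real_inner_smul_right] at h4
    have h5 : ⟪xb - q n, v⟫ ≤ 0 := nonpos_of_mul_nonpos_right h4 (htpos n)
    rw [real_inner_comm]; exact h5
  have hbd : ∀ n, q n ∈ Metric.closedBall xb (d + t₀ * ‖v‖) := by
    intro n
    rw [Metric.mem_closedBall, dist_comm, dist_eq_norm]
    have h1 : ‖xb - q n‖ ≤ ‖xb + t n • v - q n‖ + ‖t n • v‖ := by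
      have heq : xb - q n = (xb + t n • v - q n) + (-(t n • v)) := by abel
      rw [heq]
      exact (norm_add_le _ _).trans (by rw [norm_neg])
    have h2 : ‖t n • v‖ ≤ t₀ * ‖v‖ := by
      rw [norm_smul, Real.norm_eq_abs, abs_of_pos (htpos n)]
      exact mul_le_mul_of_nonneg_right (htle n) (norm_nonneg v)
    linarith [hsmall n]
  obtain ⟨w, hwball, φ, hφ, hconv⟩ :=
    (isCompact_closedBall xb (d + t₀ * ‖v‖)).tendsto_subseq hbd
  have hwΩ : w ∈ Ω := hc.mem_of_tendsto hconv (Filter.Eventually.of_forall fun j => (hq (φ j)).1)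
  have hwproj : w ∈ proj Ω xb := by
    refine ⟨hwΩ, le_antisymm ?_ (Metric.infDist_le_dist_of_mem hwΩ)⟩
    have hc1 : Filter.Tendsto (fun j => dist xb (q (φ j))) Filter.atTop (nhds (dist xb w)) :=
      (tendsto_const_nhds.dist hconv)
    have hc2 : Filter.Tendsto (fun j => d + t (φ j) * ‖v‖) Filter.atTop (nhds d) := by
      have h3 : Filter.Tendsto (fun j => t (φ j)) Filter.atTop (nhds 0) :=
        ht0.comp hφ.tendsto_atTop
      have := (h3.mul_const ‖v‖).const_add d
      simpa using this
    have hle : ∀ j, dist xb (q (φ j)) ≤ d + t (φ j) * ‖v‖ := by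
      intro j
      rw [dist_eq_norm]
      have h1 : ‖xb - q (φ j)‖ ≤ ‖xb + t (φ j) • v - q (φ j)‖ + ‖t (φ j) • v‖ := by
        have heq : xb - q (φ j) = (xb + t (φ j) • v - q (φ j)) + (-(t (φ j) • v)) := by abel
        rw [heq]; exact (norm_add_le _ _).trans (by rw [norm_neg])
      have h2 : ‖t (φ j) • v‖ = t (φ j) * ‖v‖ := by
        rw [norm_smul, Real.norm_eq_abs, abs_of_pos (htpos (φ j))]
      linarith [hsmall (φ j)]
    exact le_of_tendsto_of_tendsto' hc1 hc2 hle
  have hwpb : w = pb := huniq w hwproj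
  have hinner : Filter.Tendsto (fun j => ⟪v, xb - q (φ j)⟫) Filter.atTop (nhds ⟪v, xb - w⟫) :=
    tendsto_const_nhds.inner (tendsto_const_nhds.sub hconv)
  have := le_of_tendsto hinner (Filter.Eventually.of_forall fun j => hkey (φ j))
  rwa [hwpb] at this

lemma cone' {n c : F} (hn : n ≠ 0) (h : ∀ v : F, ⟪v, n⟫ < 0 → ⟪v, c⟫ ≤ 0) :
    ∃ l : ℝ, 0 ≤ l ∧ c = l • n := by
  have hn2 : 0 < ‖n‖ ^ 2 := pow_pos (norm_pos_iff.mpr hn) 2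
  have h' : ∀ v : F, ⟪v, n⟫ ≤ 0 → ⟪v, c⟫ ≤ 0 := by
    intro v hv
    have key : ∀ τ : ℝ, 0 < τ → ⟪v, c⟫ ≤ τ * ⟪n, c⟫ := by
      intro τ hτ
      have h1 : ⟪v - τ • n, n⟫ < 0 := by
        rw [inner_sub_left, real_inner_smul_left]
        have : 0 < τ * ⟪n, n⟫ := by
          rw [real_inner_self_eq_norm_sq]; exact mul_pos hτ hn2
        linarith
      have h2 := h _ h1
      rw [inner_sub_left, real_inner_smul_left] at h2
      linarith
    rcases le_or_gt ⟪n, c⟫ 0 with hK | hK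
    · have := key 1 one_pos; nlinarith
    · by_contra hpos
      push_neg at hpos
      have hτp : 0 < ⟪v, c⟫ / (2 * ⟪n, c⟫) := div_pos hpos (by linarith)
      have := key _ hτp
      have hτ : ⟪v, c⟫ / (2 * ⟪n, c⟫) * ⟪n, c⟫ = ⟪v, c⟫ / 2 := by
        field_simp
      rw [hτ] at this
      linarith
  set μ : ℝ := ⟪c, n⟫ / ‖n‖ ^ 2 with hμ
  have hv0n : ⟪c - μ • n, n⟫ = 0 := by
    rw [inner_sub_left, real_inner_smul_left, real_inner_self_eq_norm_sq, hμ]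
    field_simp
    ring
  have h1 : ⟪c - μ • n, c⟫ ≤ 0 := h' _ (le_of_eq hv0n)
  have h2 : ⟪-(c - μ • n), c⟫ ≤ 0 := by
    apply h'
    rw [inner_neg_left, hv0n, neg_zero]
  rw [inner_neg_left] at h2
  have h3 : ⟪c - μ • n, c⟫ = 0 := le_antisymm h1 (by linarith)
  have h4 : ⟪c - μ • n, c - μ • n⟫ = 0 := by
    rw [inner_sub_right, h3, real_inner_smul_right, hv0n]
    ring
  have h5 : c - μ • n = 0 := by
    have := real_inner_self_eq_norm_sq (c - μ • n)
    have h6 : ‖c - μ • n‖ = 0 := by nlinarith [norm_nonneg (c - μ • n)]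
    exact norm_eq_zero.mp h6
  refine ⟨μ, ?_, by rw [← sub_eq_zero]; exact h5⟩
  have h7 : ⟪-n, n⟫ < 0 := by
    rw [inner_neg_left, real_inner_self_eq_norm_sq]; nlinarith
  have h8 := h _ h7
  rw [inner_neg_left] at h8
  rw [hμ]
  have h9 : 0 ≤ ⟪c, n⟫ := by rw [real_inner_comm]; linarith
  exact div_nonneg h9 (le_of_lt hn2)
lemma one_step' [ProperSpace F] (hc : IsClosed Ω) (hne : Ω.Nonempty)
    {V : Set F} (hV : ∀ x ∈ V, ∃! w, w ∈ proj Ω x)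
    {z p : F} (hz : p ∈ proj Ω z)
    {ρ : ℝ} (hρ : 0 < ρ) (hρd : ρ < Metric.infDist z Ω)
    (hball : Metric.closedBall z ρ ⊆ V) :
    p ∈ proj Ω
      (p + ((Metric.infDist z Ω + ρ) / Metric.infDist z Ω) • (z - p)) := by
  set d := Metric.infDist z Ω with hdd
  have hd0 : 0 < d := hρ.trans hρd
  obtain ⟨xb, hxbmem, hxbmax⟩ := (isCompact_closedBall z ρ).exists_isMaxOn
    ⟨z, Metric.mem_closedBall_self hρ.le⟩ ((Metric.continuous_infDist_pt Ω).continuousOn)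
  have hmax : ∀ x ∈ Metric.closedBall z ρ, Metric.infDist x Ω ≤ Metric.infDist xb Ω :=
    fun x hx => hxbmax hx
  have hdxb : d ≤ Metric.infDist xb Ω := hmax z (Metric.mem_closedBall_self hρ.le)
  obtain ⟨pb, hpb⟩ := proj_nonempty' hc hne xb
  have huniq : ∀ q ∈ proj Ω xb, q = pb := by
    intro q hq
    obtain ⟨w, hw, hwu⟩ := hV xb (hball hxbmem)
    rw [hwu q hq, hwu pb hpb]
  have hnxbpb : ‖xb - pb‖ = Metric.infDist xb Ω := by
    rw [← dist_eq_norm]; exact hpb.2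
  have hxbpb_pos : 0 < ‖xb - pb‖ := by rw [hnxbpb]; exact hd0.trans_le hdxb
  have hxzle : ‖xb - z‖ ≤ ρ := by
    rw [← dist_eq_norm, ← Metric.mem_closedBall]; exact hxbmem
  -- the maximizer lies on the boundary sphere
  have hxz : ‖xb - z‖ = ρ := by
    rcases lt_or_eq_of_le hxzle with hlt | heq
    · exfalso
      set v := xb - pb with hv
      set t₀ := (ρ - ‖xb - z‖) / (‖v‖ + 1) with ht₀
      have ht₀pos : 0 < t₀ := by
        apply div_pos (by linarith) (by positivity)
      have hmem : ∀ s : ℝ, 0 < s → s ≤ t₀ → xb + s • v ∈ Metric.closedBall z ρ := by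
        intro s hs0 hst
        rw [Metric.mem_closedBall, dist_eq_norm]
        have he : xb + s • v - z = (xb - z) + s • v := by abel
        rw [he]
        have h1 : ‖(xb - z) + s • v‖ ≤ ‖xb - z‖ + ‖s • v‖ := norm_add_le _ _
        have h2 : ‖s • v‖ = s * ‖v‖ := by
          rw [norm_smul, Real.norm_eq_abs, abs_of_pos hs0]
        have h3 : s * ‖v‖ ≤ t₀ * (‖v‖ + 1) :=
          le_trans (mul_le_mul_of_nonneg_right hst (norm_nonneg v))
            (mul_le_mul_of_nonneg_left (by linarith) ht₀pos.le)
        have h4 : t₀ * (‖v‖ + 1) = ρ - ‖xb - z‖ := by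
          rw [ht₀]; field_simp
        linarith
      have hdir := directional' hc hne ht₀pos hpb huniq hmax hmem
      rw [← hv, real_inner_self_eq_norm_sq] at hdir
      nlinarith
    · exact heq
  have hn0 : xb - z ≠ 0 := by
    intro h0
    rw [h0, norm_zero] at hxz
    exact hρ.ne hxz
  -- cone condition at the boundary maximizer
  have hdir : ∀ v : F, ⟪v, xb - z⟫ < 0 → ⟪v, xb - pb⟫ ≤ 0 := by
    intro v hvn
    set t₀ := (-2 * ⟪v, xb - z⟫) / (‖v‖ ^ 2 + 1) with ht₀
    have ht₀pos : 0 < t₀ := by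
      apply div_pos (by linarith) (by positivity)
    have hmem : ∀ s : ℝ, 0 < s → s ≤ t₀ → xb + s • v ∈ Metric.closedBall z ρ := by
      intro s hs0 hst
      rw [Metric.mem_closedBall, dist_eq_norm]
      have he : xb + s • v - z = (xb - z) + s • v := by abel
      have hsq : ‖(xb - z) + s • v‖ ^ 2 ≤ ρ ^ 2 := by
        rw [norm_add_sq_real, real_inner_smul_right, hxz]
        have h2 : ‖s • v‖ = s * ‖v‖ := by
          rw [norm_smul, Real.norm_eq_abs, abs_of_pos hs0]
        rw [h2]
        have hcomm : ⟪xb - z, v⟫ = ⟪v, xb - z⟫ := real_inner_comm _ _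
        have h3 : s * (‖v‖ ^ 2 + 1) ≤ -2 * ⟪v, xb - z⟫ := by
          have := mul_le_mul_of_nonneg_right hst (by positivity : (0:ℝ) ≤ ‖v‖ ^ 2 + 1)
          rw [ht₀, div_mul_cancel₀] at this
          · exact this
          · positivity
        nlinarith [sq_nonneg ‖v‖, hs0]
      rw [he]
      nlinarith [norm_nonneg ((xb - z) + s • v), hρ]
    exact directional' hc hne ht₀pos hpb huniq hmax hmem
  obtain ⟨l, hl0, hlc⟩ := cone' hn0 hdir
  have hlρ : ‖xb - pb‖ = l * ρ := by
    rw [hlc, norm_smul, Real.norm_eq_abs, abs_of_nonneg hl0, hxz]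
  have hl1 : 1 < l := by nlinarith [hd0.trans_le hdxb, hnxbpb]
  have hlne : l ≠ 0 := by linarith
  have hz3 : z - pb = (l - 1) • (xb - z) := by
    rw [sub_smul, one_smul, ← hlc]; abel
  have key : (1 - 1/l) • (xb - pb) = (l - 1) • (xb - z) := by
    rw [hlc, smul_smul]
    congr 1
    field_simp
  have hseg := segment_proj' hc hne hpb
    (t := 1 - 1/l) (by
      have : 1/l ≤ 1 := by rw [div_le_one (by linarith)]; linarith
      linarith)
    (by
      have : 0 < 1/l := by positivity
      linarith)
  have hz2 : pb + (1 - 1/l) • (xb - pb) = z := by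
    rw [key, ← hz3]; abel
  rw [hz2] at hseg
  -- identify p = pb using uniqueness at z
  obtain ⟨w, hw, hwu⟩ := hV z (hball (Metric.mem_closedBall_self hρ.le))
  have hppb : p = pb := (hwu p hz).trans (hwu pb hseg).symm
  subst hppb
  have hd_eq : d = (l - 1) * ρ := by
    have h1 : ‖z - p‖ = d := by rw [← dist_eq_norm]; exact hz.2
    have h2 : ‖z - p‖ = (l - 1) * ρ := by
      rw [hz3, norm_smul, Real.norm_eq_abs, abs_of_nonneg (by linarith), hxz]
    linarith
  have hlm : l - 1 ≠ 0 := by intro h0; rw [sub_eq_zero] at h0; exact (by linarith : (1:ℝ) ≠ l) h0.symm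
  have hcoef : (d + ρ) / d * (l - 1) = l := by
    rw [hd_eq]; field_simp; ring
  have hfin : p + ((d + ρ) / d) • (z - p) = xb := by
    calc p + ((d + ρ) / d) • (z - p)
        = p + ((d + ρ) / d) • ((l - 1) • (xb - z)) := by rw [hz3]
      _ = p + ((d + ρ) / d * (l - 1)) • (xb - z) := by rw [smul_smul]
      _ = p + (xb - p) := by rw [hcoef, ← hlc]
      _ = xb := by abel
  rw [hfin]
  exact hpb
lemma iterate' [ProperSpace F] (hc : IsClosed Ω) (hne : Ω.Nonempty)
    {xh : F} (hxh : xh ∈ Ω) {r : ℝ}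
    (hV : ∀ x ∈ Metric.ball xh r, ∃! w, w ∈ proj Ω x)
    {M δ : ℝ} (hM : 1 ≤ M) (hδ : 0 < δ) (hδr : (2 + M) * δ < r) :
    ∀ k : ℕ, (3/2 : ℝ) ^ k ≤ M → ∀ z ∈ Metric.closedBall xh δ, ∀ p ∈ proj Ω z,
      0 < Metric.infDist z Ω →
      p ∈ proj Ω (p + ((3/2 : ℝ) ^ k) • (z - p)) := by
  intro k
  induction k with
  | zero =>
    intro _ z hz p hp _
    simpa using hp
  | succ k ih =>
    intro hk1 z hz p hp hd0
    have hsle : (3/2 : ℝ) ^ k ≤ (3/2 : ℝ) ^ (k+1) := by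
      apply pow_le_pow_right₀ (by norm_num) (by omega)
    have hk : (3/2 : ℝ) ^ k ≤ M := hsle.trans hk1
    set s := (3/2 : ℝ) ^ k with hs
    have hs1 : 1 ≤ s := one_le_pow₀ (by norm_num)
    have hs0 : 0 < s := by linarith
    have hpk := ih hk z hz p hp hd0
    set zk := p + s • (z - p) with hzk
    have hzkp : zk - p = s • (z - p) := by rw [hzk]; abel
    have hd : Metric.infDist z Ω = ‖z - p‖ := by rw [← dist_eq_norm]; exact hp.2.symm
    have hdk : Metric.infDist zk Ω = s * ‖z - p‖ := by
      rw [← hpk.2, dist_eq_norm, hzkp, norm_smul, Real.norm_eq_abs, abs_of_pos hs0]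
    have hdk0 : 0 < Metric.infDist zk Ω := by
      rw [hdk]; rw [hd] at hd0; positivity
    -- distance bounds
    have hzδ : ‖z - xh‖ ≤ δ := by
      rw [← dist_eq_norm]; exact hz
    have hdδ : ‖z - p‖ ≤ δ := by
      rw [← hd]
      exact (Metric.infDist_le_dist_of_mem hxh).trans (by rw [dist_eq_norm]; exact hzδ)
    have hpxh : ‖p - xh‖ ≤ 2 * δ := by
      have h1 : p - xh = -(z - p) + (z - xh) := by abel
      rw [h1]
      exact (norm_add_le _ _).trans (by rw [norm_neg]; linarith)
    have hball : Metric.closedBall zk (Metric.infDist zk Ω / 2) ⊆ Metric.ball xh r := by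
      intro u hu
      rw [Metric.mem_closedBall] at hu
      rw [Metric.mem_ball]
      have h1 : dist u xh ≤ dist u zk + dist zk xh := dist_triangle _ _ _
      have h2 : dist zk xh ≤ ‖p - xh‖ + s * ‖z - p‖ := by
        rw [dist_eq_norm]
        have he : zk - xh = (p - xh) + s • (z - p) := by rw [hzk]; abel
        rw [he]
        refine (norm_add_le _ _).trans ?_
        rw [norm_smul, Real.norm_eq_abs, abs_of_pos hs0]
      have h3 : s * ‖z - p‖ ≤ s * δ := mul_le_mul_of_nonneg_left hdδ hs0.le
      have h4 : (3/2) * (s * δ) ≤ M * δ := by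
        have : (3/2) * s ≤ M := by
          rw [hs]
          calc (3/2 : ℝ) * (3/2)^k = (3/2)^(k+1) := by ring
            _ ≤ M := hk1
        calc (3/2 : ℝ) * (s * δ) = ((3/2) * s) * δ := by ring
          _ ≤ M * δ := mul_le_mul_of_nonneg_right this hδ.le
      rw [hdk] at hu
      linarith
    have hstep := one_step' hc hne hV hpk
      (ρ := Metric.infDist zk Ω / 2) (by linarith) (by linarith) hball
    have hcoef : (Metric.infDist zk Ω + Metric.infDist zk Ω / 2) / Metric.infDist zk Ω
        = (3/2 : ℝ) := by field_simp; ring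
    rw [hcoef, hzkp, smul_smul] at hstep
    have hpow : (3/2 : ℝ) * s = (3/2 : ℝ) ^ (k+1) := by rw [hs, pow_succ]; ring
    rw [hpow] at hstep
    exact hstep

lemma scaled' [ProperSpace F] (hc : IsClosed Ω) (hne : Ω.Nonempty)
    {xh : F} (hxh : xh ∈ Ω) {r : ℝ} (hr : 0 < r)
    (hV : ∀ x ∈ Metric.ball xh r, ∃! w, w ∈ proj Ω x)
    {ε' : ℝ} (hε' : 0 < ε') :
    ∃ δ > 0, ∀ z ∈ Metric.closedBall xh δ, ∀ p ∈ proj Ω z, ∀ w ∈ Ω,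
      ⟪z - p, w - p⟫ ≤ ε' * ‖w - p‖ ^ 2 := by
  obtain ⟨k, hk⟩ := pow_unbounded_of_one_lt (R := ℝ) (1/ε') (by norm_num : (1:ℝ) < 3/2)
  set s := (3/2 : ℝ) ^ k with hs
  have hs1 : 1 ≤ s := one_le_pow₀ (by norm_num)
  have hs0 : 0 < s := by linarith
  refine ⟨r / (2 * (2 + s)), by positivity, ?_⟩
  intro z hz p hp w hw
  have hδr : (2 + s) * (r / (2 * (2 + s))) < r := by
    have h0 : (2 + s) ≠ 0 := by positivity
    have he : (2 + s) * (r / (2 * (2 + s))) = r / 2 := by field_simp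
    rw [he]; linarith
  by_cases hd : Metric.infDist z Ω = 0
  · have h1 : dist z p = 0 := by rw [hp.2, hd]
    have h2 : p = z := (dist_eq_zero.mp h1).symm
    rw [h2, sub_self, inner_zero_left]
    positivity
  · have hd0 : 0 < Metric.infDist z Ω :=
      lt_of_le_of_ne Metric.infDist_nonneg (Ne.symm hd)
    have hmem := iterate' hc hne hxh hV hs1 (by positivity) hδr k le_rfl z hz p hp hd0
    have hbp := basic_prox' hmem hw
    rw [add_sub_cancel_left, real_inner_smul_left] at hbp
    have h1 : ⟪z - p, w - p⟫ ≤ ‖w - p‖ ^ 2 / (2 * s) := by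
      rw [le_div_iff₀ (by positivity)]
      nlinarith
    refine h1.trans ?_
    rw [div_le_iff₀ (by positivity)]
    have h2 : 1 < ε' * s := by
      rw [div_lt_iff₀ hε'] at hk
      nlinarith [hk]
    nlinarith [sq_nonneg ‖w - p‖]
theorem aux_main [ProperSpace F]
    (S : Set F) (hne : S.Nonempty) (hclosed : IsClosed S)
    (xhat : F) (hxhat : xhat ∈ S) (hprox : ProxRegularAt S xhat) :
    ∀ ε > (0 : ℝ), ∃ U ∈ nhds xhat,
      ∀ y ∈ U, ∀ z ∈ U, ∀ yp ∈ proj S y, ∀ zp ∈ proj S z,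
        ‖zp - yp‖ ^ 2 ≤ (1 + ε) * ‖z - y‖ ^ 2 - ‖(zp - z) - (yp - y)‖ ^ 2 := by
  intro ε hε
  obtain ⟨U₀, hU₀, hsv⟩ := hprox
  obtain ⟨r, hr, hball⟩ := Metric.mem_nhds_iff.mp hU₀
  set ε' := min (1/4 : ℝ) (ε/16) with hε'def
  have hε'0 : 0 < ε' := lt_min (by norm_num) (by linarith)
  have hε'1 : ε' ≤ 1/4 := min_le_left _ _
  have hε'2 : ε' ≤ ε/16 := min_le_right _ _
  obtain ⟨δ, hδ0, hS⟩ := scaled' hclosed hne hxhat hr (fun x hx => hsv x (hball hx)) hε'0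
  refine ⟨Metric.ball xhat δ, Metric.ball_mem_nhds _ hδ0, ?_⟩
  intro y hy z hz yp hyp zp hzp
  have I1 := hS z (Metric.ball_subset_closedBall hz) zp hzp yp hyp.1
  have I2 := hS y (Metric.ball_subset_closedBall hy) yp hyp zp hzp.1
  set a := zp - yp with ha
  set b := z - y with hb
  rw [show yp - zp = -a from by rw [ha]; abel] at I1
  rw [inner_neg_right, norm_neg] at I1
  have hkey : ⟪a, a - b⟫ ≤ 2 * ε' * ‖a‖ ^ 2 := by
    have h3 : a - b = (y - yp) - (z - zp) := by rw [ha, hb]; abel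
    rw [h3, inner_sub_right]
    have c1 : ⟪a, y - yp⟫ = ⟪y - yp, a⟫ := real_inner_comm _ _
    have c2 : ⟪a, z - zp⟫ = ⟪z - zp, a⟫ := real_inner_comm _ _
    rw [c1, c2]
    linarith
  have hab : ⟪a, b⟫ = ‖a‖ ^ 2 - ⟪a, a - b⟫ := by
    have h5 : ⟪a, a - b⟫ = ⟪a, a⟫ - ⟪a, b⟫ := inner_sub_right a a b
    rw [real_inner_self_eq_norm_sq] at h5
    linarith
  have hcs : ⟪a, b⟫ ≤ ‖a‖ * ‖b‖ := real_inner_le_norm a b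
  have hna : 0 ≤ ‖a‖ := norm_nonneg a
  have hnb : 0 ≤ ‖b‖ := norm_nonneg b
  have ha2 : ‖a‖ ^ 2 ≤ 2 * (‖a‖ * ‖b‖) := by nlinarith
  have hab2 : ‖a‖ ≤ 2 * ‖b‖ := by
    rcases eq_or_lt_of_le hna with h0 | h0
    · nlinarith
    · exact (mul_le_mul_iff_left₀ h0).mp (by nlinarith : ‖a‖ * ‖a‖ ≤ (2 * ‖b‖) * ‖a‖)
  have ha4 : ‖a‖ ^ 2 ≤ 4 * ‖b‖ ^ 2 := by nlinarith
  have hkey2 : ⟪a, a - b⟫ ≤ (ε / 2) * ‖b‖ ^ 2 := by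
    nlinarith [mul_le_mul_of_nonneg_left ha4 hε'0.le,
      mul_le_mul_of_nonneg_right hε'2 (sq_nonneg ‖b‖)]
  have hnorm : ‖a - b‖ ^ 2 = ‖a‖ ^ 2 - 2 * ⟪a, b⟫ + ‖b‖ ^ 2 := norm_sub_sq_real a b
  have hgoal : (zp - z) - (yp - y) = a - b := by rw [ha, hb]; abel
  rw [hgoal]
  linarith

end RealAux

/-- If a nonempty closed set `Ω` in a finite-dimensional Hilbert space is
prox-regular at `xhat ∈ Ω`, then for every `ε > 0` there is a neighborhood `U` of `xhat` on
which `P_Ω` is almost averaged with violation `ε` and averaging constant `1/2`: for all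
`y, z ∈ U`, `y⁺ ∈ P_Ω(y)`, `z⁺ ∈ P_Ω(z)`,
`‖z⁺ − y⁺‖² ≤ (1+ε)‖z − y‖² − ‖(z⁺ − z) − (y⁺ − y)‖²`. -/
theorem proj_almostAveraged_of_proxRegular
    {𝕜 : Type*} [RCLike 𝕜] {E : Type*} [NormedAddCommGroup E] [InnerProductSpace 𝕜 E]
    [FiniteDimensional 𝕜 E]
    (Ω : Set E) (hne : Ω.Nonempty) (hclosed : IsClosed Ω)
    (xhat : E) (hxhat : xhat ∈ Ω) (hprox : ProxRegularAt Ω xhat) :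
    ∀ ε > (0 : ℝ), ∃ U ∈ nhds xhat,
      ∀ y ∈ U, ∀ z ∈ U, ∀ yp ∈ proj Ω y, ∀ zp ∈ proj Ω z,
        ‖zp - yp‖ ^ 2 ≤ (1 + ε) * ‖z - y‖ ^ 2 - ‖(zp - z) - (yp - y)‖ ^ 2 := by
  haveI : ProperSpace E := FiniteDimensional.proper 𝕜 E
  letI : InnerProductSpace ℝ E := InnerProductSpace.rclikeToReal 𝕜 E
  exact aux_main Ω hne hclosed xhat hxhat hprox
end
end
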